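/- arXiv:2512.13150 — 8 statements merged into one kernel-verified Lean document; each statement's English description precedes it below -/
import Mathlib

section
/- Let (X_n) be i.i.d. nonnegative random variables with distribution function F such that P[X_1 = 0] = 0, inf of the support is 0, and F(t) = O(t^α) as t → 0+ for some α > 0. Then for every x > 0, lim_{n→∞} P[S_{n+1} ≤ x]/P[S_n ≤ x] = 0, where S_n = X_1 + ... + X_n. -/
/-!
Write `Q_n(c) = P[S_n ≤ c]` and `F` for the distribution function of `X_0`. Splitting on whether
`X_n ≤ ε` gives `Q_{n+1}(x) ≤ F(ε) Q_n(x) + Q_n(x - ε)`, and `F(ε) → 0` as `ε → 0+` because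
`X_0` has no atom at `0`. For the second term pick `a > 0` with `p = P[a < X_0 ≤ ε] > 0`, possible
since `0` is in the support. Each of the `n` events "`X_i ∈ (a, ε]` and the other `n - 1` summands
add up to at most `x - ε`" has probability at least `p Q_n(x - ε)` and lies in `{S_n ≤ x}`, where
at most `x / a` of them can hold simultaneously. Hence `n p Q_n(x - ε) ≤ (x / a) Q_n(x)`, and the
ratio is eventually at most `F(ε) + x / (a p n)`.
-/

open MeasureTheory ProbabilityTheory Filter Set
open scoped ENNReal Topology Finset

lemma card_filter_lt_mul_le_sum {ι : Type*} (s : Finset ι) {f : ι → ℝ}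
    (hf : ∀ i ∈ s, 0 ≤ f i) (a : ℝ) :
    #{i ∈ s | a < f i} * a ≤ ∑ i ∈ s, f i := by
  calc #{i ∈ s | a < f i} * a ≤ ∑ i ∈ s with a < f i, f i := by
        simpa using Finset.card_nsmul_le_sum _ f a fun i hi => (Finset.mem_filter.1 hi).2.le
    _ ≤ ∑ i ∈ s, f i :=
        Finset.sum_le_sum_of_subset_of_nonneg (Finset.filter_subset _ _) fun i hi _ => hf i hi

lemma sum_measure_le_mul_measure_of_card_le {ι Ω : Type*} [MeasurableSpace Ω] {μ : Measure Ω}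
    {s : Finset ι} {B : ι → Set Ω} [∀ ω, DecidablePred fun i => ω ∈ B i] {E : Set Ω}
    (hB : ∀ i ∈ s, MeasurableSet (B i)) (hE : MeasurableSet E) (hBE : ∀ i ∈ s, B i ⊆ E) {k : ℕ}
    (hk : ∀ ω ∈ E, #{i ∈ s | ω ∈ B i} ≤ k) :
    ∑ i ∈ s, μ (B i) ≤ k * μ E := by
  have hpt : ∀ ω, ∑ i ∈ s, (B i).indicator 1 ω ≤ E.indicator (fun _ => (k : ℝ≥0∞)) ω := by
    intro ω
    by_cases hω : ω ∈ E
    · simpa [Set.indicator_apply, Finset.sum_boole, hω] using hk ω hω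
    · have hB' : ∀ i ∈ s, ω ∉ B i := fun i hi h => hω (hBE i hi h)
      simpa [hω] using hB'
  calc ∑ i ∈ s, μ (B i) = ∫⁻ ω, ∑ i ∈ s, (B i).indicator 1 ω ∂μ := by
        rw [lintegral_finsetSum' _ fun i hi => (measurable_one.indicator (hB i hi)).aemeasurable]
        exact Finset.sum_congr rfl fun i hi => (lintegral_indicator_one (hB i hi)).symm
    _ ≤ ∫⁻ ω, E.indicator (fun _ => (k : ℝ≥0∞)) ω ∂μ := lintegral_mono hpt
    _ = k * μ E := lintegral_indicator_const hE _

section RightContinuity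

variable {Ω : Type*} [MeasurableSpace Ω] {P : Measure Ω} [IsFiniteMeasure P] {Y : Ω → ℝ}

lemma tendsto_measureReal_le_nhdsGT_zero (hY : Measurable Y) (hnonneg : ∀ ω, 0 ≤ Y ω)
    (hzero : P {ω | Y ω = 0} = 0) :
    Tendsto (fun t => P.real {ω | Y ω ≤ t}) (𝓝[>] 0) (𝓝 0) := by
  have hInter : ⋂ t > (0 : ℝ), {ω | Y ω ≤ t} = {ω | Y ω = 0} := by
    ext ω
    simp only [mem_iInter, mem_ofPred_eq]
    refine ⟨fun h => le_antisymm (le_of_forall_pos_le_add fun t ht => ?_) (hnonneg ω), ?_⟩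
    · simpa using h t ht
    · intro h t ht
      exact h ▸ ht.le
  have h := tendsto_measure_biInter_gt (μ := P) (s := fun t : ℝ => {ω | Y ω ≤ t}) (a := 0)
    (fun t _ => (measurableSet_le hY measurable_const).nullMeasurableSet)
    (fun t u _ htu ω hω => le_trans hω htu) ⟨1, one_pos, measure_ne_top P _⟩
  rw [hInter, hzero] at h
  have h' := (ENNReal.tendsto_toReal ENNReal.zero_ne_top).comp h
  rwa [ENNReal.toReal_zero] at h'

lemma exists_measureReal_Ioc_pos (hY : Measurable Y) (hnonneg : ∀ ω, 0 ≤ Y ω)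
    (hzero : P {ω | Y ω = 0} = 0) {ε : ℝ} (hε : P {ω | Y ω ≤ ε} ≠ 0) :
    ∃ a, 0 < a ∧ 0 < P.real (Y ⁻¹' Ioc a ε) := by
  have hFε : 0 < P.real {ω | Y ω ≤ ε} := ENNReal.toReal_pos hε (measure_ne_top P _)
  obtain ⟨a, hFa, ha⟩ := (((tendsto_measureReal_le_nhdsGT_zero hY hnonneg hzero).eventually
    (gt_mem_nhds hFε)).and self_mem_nhdsWithin).exists
  refine ⟨a, ha, ?_⟩
  have hsplit : {ω | Y ω ≤ ε} ⊆ {ω | Y ω ≤ a} ∪ Y ⁻¹' Ioc a ε := fun ω hω =>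
    (le_or_gt (Y ω) a).imp id fun h => ⟨h, hω⟩
  linarith [(measureReal_mono hsplit (measure_ne_top P _)).trans (measureReal_union_le _ _)]

end RightContinuity

section PartialSums

variable {Ω : Type*} [MeasurableSpace Ω] {P : Measure Ω} {X : ℕ → Ω → ℝ}

lemma measure_sum_le_inter_preimage_eq_mul (hmeas : ∀ i, Measurable (X i))
    (hindep : iIndepFun X P) (hident : ∀ i, IdentDistrib (X i) (X 0) P P) {s : Finset ℕ} {i : ℕ}
    (hi : i ∉ s) (c : ℝ) {B : Set ℝ} (hB : MeasurableSet B) :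
    P ({ω | ∑ j ∈ s, X j ω ≤ c} ∩ X i ⁻¹' B)
      = P {ω | ∑ j ∈ s, X j ω ≤ c} * P (X 0 ⁻¹' B) := by
  have hsum : (∑ j ∈ s, X j) ⁻¹' Iic c = {ω | ∑ j ∈ s, X j ω ≤ c} := by
    ext ω
    simp [Finset.sum_apply]
  rw [← (hident i).measure_mem_eq hB, ← hsum]
  exact (hindep.indepFun_finsetSum_of_notMem hmeas hi
    ).measure_inter_preimage_eq_mul (Iic c) B measurableSet_Iic hB

lemma measure_sum_le_ne_zero [IsProbabilityMeasure P] (hmeas : ∀ i, Measurable (X i))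
    (hindep : iIndepFun X P) (hident : ∀ i, IdentDistrib (X i) (X 0) P P)
    (hacc : ∀ t : ℝ, 0 < t → P {ω | X 0 ω ≤ t} ≠ 0) :
    ∀ (n : ℕ) {x : ℝ}, 0 < x → P {ω | ∑ i ∈ Finset.range n, X i ω ≤ x} ≠ 0
  | 0, x, hx => by simp [hx.le]
  | n + 1, x, hx => by
    have hsub : {ω | ∑ i ∈ Finset.range n, X i ω ≤ x / 2} ∩ X n ⁻¹' Iic (x / 2)
        ⊆ {ω | ∑ i ∈ Finset.range (n + 1), X i ω ≤ x} := by
      rintro ω ⟨hsum, hlast : X n ω ≤ x / 2⟩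
      simp only [mem_ofPred_eq, Finset.sum_range_succ] at hsum ⊢
      linarith
    refine fun hnull => ?_
    have hprod := measure_mono_null hsub hnull
    rw [measure_sum_le_inter_preimage_eq_mul hmeas hindep hident Finset.notMem_range_self _
      measurableSet_Iic, mul_eq_zero] at hprod
    exact hprod.elim (measure_sum_le_ne_zero hmeas hindep hident hacc n (half_pos hx))
      (hacc _ (half_pos hx))

lemma measureReal_sum_succ_le [IsFiniteMeasure P] (hmeas : ∀ i, Measurable (X i))
    (hindep : iIndepFun X P) (hident : ∀ i, IdentDistrib (X i) (X 0) P P)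
    (hnonneg : ∀ i ω, 0 ≤ X i ω) (n : ℕ) (x ε : ℝ) :
    P.real {ω | ∑ i ∈ Finset.range (n + 1), X i ω ≤ x}
      ≤ P.real {ω | X 0 ω ≤ ε} * P.real {ω | ∑ i ∈ Finset.range n, X i ω ≤ x}
        + P.real {ω | ∑ i ∈ Finset.range n, X i ω ≤ x - ε} := by
  have hsub : {ω | ∑ i ∈ Finset.range (n + 1), X i ω ≤ x}
      ⊆ ({ω | ∑ i ∈ Finset.range n, X i ω ≤ x} ∩ X n ⁻¹' Iic ε)
        ∪ {ω | ∑ i ∈ Finset.range n, X i ω ≤ x - ε} := by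
    intro ω hω
    simp only [mem_ofPred_eq, Finset.sum_range_succ] at hω
    rcases le_or_gt (X n ω) ε with hlast | hlast
    · refine Or.inl ⟨?_, hlast⟩
      change _ ≤ x
      linarith [hnonneg n ω]
    · exact Or.inr (show _ ≤ x - ε by linarith)
  have hinter : P.real ({ω | ∑ i ∈ Finset.range n, X i ω ≤ x} ∩ X n ⁻¹' Iic ε)
      = P.real {ω | X 0 ω ≤ ε} * P.real {ω | ∑ i ∈ Finset.range n, X i ω ≤ x} := by
    rw [measureReal_def, measure_sum_le_inter_preimage_eq_mul hmeas hindep hident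
      Finset.notMem_range_self _ measurableSet_Iic, ENNReal.toReal_mul, mul_comm]
    rfl
  calc _ ≤ _ := measureReal_mono hsub (measure_ne_top P _)
    _ ≤ _ := measureReal_union_le _ _
    _ = _ := by rw [hinter]

lemma natCast_mul_measure_sum_le_sub_le [IsFiniteMeasure P] (hmeas : ∀ i, Measurable (X i))
    (hindep : iIndepFun X P) (hident : ∀ i, IdentDistrib (X i) (X 0) P P)
    (hnonneg : ∀ i ω, 0 ≤ X i ω) (n : ℕ) {x ε a : ℝ} (ha : 0 < a) :
    n * P (X 0 ⁻¹' Ioc a ε) * P {ω | ∑ i ∈ Finset.range n, X i ω ≤ x - ε}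
      ≤ ⌊x / a⌋₊ * P {ω | ∑ i ∈ Finset.range n, X i ω ≤ x} := by
  classical
  set B : ℕ → Set Ω := fun i =>
    {ω | ∑ j ∈ (Finset.range n).erase i, X j ω ≤ x - ε} ∩ X i ⁻¹' Ioc a ε
  have hB : ∀ i, MeasurableSet (B i) := fun i =>
    (measurableSet_le (Finset.measurable_sum _ fun j _ => hmeas j) measurable_const).inter
      (hmeas i measurableSet_Ioc)
  have hE : MeasurableSet {ω | ∑ i ∈ Finset.range n, X i ω ≤ x} :=
    measurableSet_le (Finset.measurable_sum _ fun j _ => hmeas j) measurable_const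
  have hBE : ∀ i ∈ Finset.range n, B i ⊆ {ω | ∑ i ∈ Finset.range n, X i ω ≤ x} := by
    rintro i hi ω ⟨hrest, hi_mem⟩
    simp only [mem_ofPred_eq, ← Finset.add_sum_erase _ _ hi] at hrest ⊢
    linarith [hi_mem.2]
  have hcount : ∀ ω ∈ {ω | ∑ i ∈ Finset.range n, X i ω ≤ x},
      #{i ∈ Finset.range n | ω ∈ B i} ≤ ⌊x / a⌋₊ := by
    intro ω hω
    refine (Finset.card_le_card (t := {i ∈ Finset.range n | a < X i ω}) fun i hi => ?_).trans ?_
    · simp only [Finset.mem_filter] at hi ⊢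
      exact ⟨hi.1, hi.2.2.1⟩
    refine Nat.le_floor ((le_div_iff₀ ha).2 ?_)
    exact (card_filter_lt_mul_le_sum _ (fun i _ => hnonneg i ω) a).trans hω
  have hrest : ∀ i ∈ Finset.range n, P {ω | ∑ i ∈ Finset.range n, X i ω ≤ x - ε}
      ≤ P {ω | ∑ j ∈ (Finset.range n).erase i, X j ω ≤ x - ε} := fun i hi =>
    measure_mono fun ω hω => le_trans
      (Finset.sum_le_sum_of_subset_of_nonneg (Finset.erase_subset _ _)
        fun j _ _ => hnonneg j ω) hω
  calc n * P (X 0 ⁻¹' Ioc a ε) * P {ω | ∑ i ∈ Finset.range n, X i ω ≤ x - ε}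
      = ∑ i ∈ Finset.range n,
          P {ω | ∑ i ∈ Finset.range n, X i ω ≤ x - ε} * P (X 0 ⁻¹' Ioc a ε) := by
        simp [mul_comm, mul_left_comm]
    _ ≤ ∑ i ∈ Finset.range n, P (B i) := Finset.sum_le_sum fun i hi => by
        rw [measure_sum_le_inter_preimage_eq_mul hmeas hindep hident (Finset.notMem_erase i _) _
          measurableSet_Ioc]
        exact mul_le_mul_left (hrest i hi) _
    _ ≤ _ := sum_measure_le_mul_measure_of_card_le (fun i _ => hB i) hE hBE hcount

lemma measureReal_sum_succ_div_le [IsProbabilityMeasure P] (hmeas : ∀ i, Measurable (X i))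
    (hindep : iIndepFun X P) (hident : ∀ i, IdentDistrib (X i) (X 0) P P)
    (hnonneg : ∀ i ω, 0 ≤ X i ω) (hacc : ∀ t : ℝ, 0 < t → P {ω | X 0 ω ≤ t} ≠ 0)
    {x ε a : ℝ} (hx : 0 < x) (ha : 0 < a) (hp : 0 < P.real (X 0 ⁻¹' Ioc a ε))
    {n : ℕ} (hn : n ≠ 0) :
    P.real {ω | ∑ i ∈ Finset.range (n + 1), X i ω ≤ x}
        / P.real {ω | ∑ i ∈ Finset.range n, X i ω ≤ x}
      ≤ P.real {ω | X 0 ω ≤ ε} + ⌊x / a⌋₊ / P.real (X 0 ⁻¹' Ioc a ε) / n := by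
  have hcount : n * P.real (X 0 ⁻¹' Ioc a ε) * P.real {ω | ∑ i ∈ Finset.range n, X i ω ≤ x - ε}
      ≤ ⌊x / a⌋₊ * P.real {ω | ∑ i ∈ Finset.range n, X i ω ≤ x} := by
    simpa [measureReal_def, ENNReal.toReal_mul] using ENNReal.toReal_mono
      (by finiteness) (natCast_mul_measure_sum_le_sub_le hmeas hindep hident hnonneg n ha (ε := ε))
  set p := P.real (X 0 ⁻¹' Ioc a ε)
  set q := P.real {ω | ∑ i ∈ Finset.range n, X i ω ≤ x}
  have hq : 0 < q := ENNReal.toReal_pos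
    (measure_sum_le_ne_zero hmeas hindep hident hacc n hx) (measure_ne_top P _)
  have hrest : P.real {ω | ∑ i ∈ Finset.range n, X i ω ≤ x - ε} ≤ ⌊x / a⌋₊ / p / n * q := by
    rw [div_div, div_mul_eq_mul_div, le_div_iff₀ (by positivity)]
    linarith
  rw [div_le_iff₀ hq]
  calc _ ≤ P.real {ω | X 0 ω ≤ ε} * q + P.real {ω | ∑ i ∈ Finset.range n, X i ω ≤ x - ε} :=
        measureReal_sum_succ_le hmeas hindep hident hnonneg n x ε
    _ ≤ P.real {ω | X 0 ω ≤ ε} * q + ⌊x / a⌋₊ / p / n * q := by gcongr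
    _ = _ := by ring

end PartialSums

theorem stmt3_general
    {Ω : Type*} [MeasurableSpace Ω] (P : Measure Ω) [IsProbabilityMeasure P]
    (X : ℕ → Ω → ℝ)
    (hmeas : ∀ i, Measurable (X i))
    (hindep : iIndepFun X P)
    (hident : ∀ i, IdentDistrib (X i) (X 0) P P)
    (hnonneg : ∀ i ω, 0 ≤ X i ω)
    (hzero : P {ω | X 0 ω = 0} = 0)
    (hacc : ∀ t : ℝ, 0 < t → P {ω | X 0 ω ≤ t} ≠ 0) :
    ∀ x : ℝ, 0 < x →
      Tendsto
        (fun n : ℕ =>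
          (P {ω | ∑ i ∈ Finset.range (n + 1), X i ω ≤ x}).toReal
            / (P {ω | ∑ i ∈ Finset.range n, X i ω ≤ x}).toReal)
        atTop (nhds 0) := by
  intro x hx
  refine tendsto_order.2 ⟨fun θ hθ => Eventually.of_forall fun n => hθ.trans_le (by positivity),
    fun θ hθ => ?_⟩
  obtain ⟨ε, hFε, hε⟩ := (((tendsto_measureReal_le_nhdsGT_zero (hmeas 0) (hnonneg 0) hzero
    ).eventually (gt_mem_nhds (half_pos hθ))).and self_mem_nhdsWithin).exists
  obtain ⟨a, ha, hp⟩ := exists_measureReal_Ioc_pos (hmeas 0) (hnonneg 0) hzero (hacc ε hε)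
  have hdecay := tendsto_const_div_atTop_nhds_zero_nat
    ((⌊x / a⌋₊ : ℝ) / P.real (X 0 ⁻¹' Ioc a ε))
  filter_upwards [hdecay.eventually (gt_mem_nhds (half_pos hθ)), eventually_ne_atTop 0]
    with n hn hn0
  calc _ ≤ _ := measureReal_sum_succ_div_le hmeas hindep hident hnonneg hacc hx ha hp hn0
    _ < θ := by linarith

theorem stmt3
    {Ω : Type*} [MeasurableSpace Ω] (P : Measure Ω) [IsProbabilityMeasure P]
    (X : ℕ → Ω → ℝ)
    (hmeas : ∀ i, Measurable (X i))
    (hindep : iIndepFun X P)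
    (hident : ∀ i, IdentDistrib (X i) (X 0) P P)
    (hnonneg : ∀ i ω, 0 ≤ X i ω)
    (hzero : P {ω | X 0 ω = 0} = 0)
    (hacc : ∀ t : ℝ, 0 < t → P {ω | X 0 ω ≤ t} ≠ 0)
    (α C : ℝ) (hα : 0 < α)
    (hO : ∃ δ > 0, ∀ t : ℝ, 0 < t → t ≤ δ →
      (P {ω | X 0 ω ≤ t}).toReal ≤ C * t ^ α) :
    ∀ x : ℝ, 0 < x →
      Tendsto
        (fun n : ℕ =>
          (P {ω | ∑ i ∈ Finset.range (n + 1), X i ω ≤ x}).toReal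
            / (P {ω | ∑ i ∈ Finset.range n, X i ω ≤ x}).toReal)
        atTop (nhds 0) :=
  stmt3_general P X hmeas hindep hident hnonneg hzero hacc
end

section
/- Let (X_n) be i.i.d. nonnegative random variables with P[X_1 = 0] = 0, distribution function F satisfying F(t) = O(t^α) near 0 for some α > 0, and let x > x_min ≥ 0 where x_min is a fixed positive number in (0,x). Set k_α = ⌈1/α⌉. Then for n > k_α, with q = ⌊n/k_α⌋: P[S_n ≤ x − x_min] ≤ q · P[S_{n−k_α} ≤ x − x_min] · P[X_1 ≤ (x − x_min)/q]^{k_α}. -/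
/-!
Cut the first `q * k` summands into `q` consecutive blocks of length `k`. For nonnegative
summands, `S_n ≤ y` forces some block to have sum at most `y / q`; then each of its `k` summands
is at most `y / q` while the `n - k` summands outside it still sum to at most `y`. Independence
factorises the probability of that event as `P[S_{n-k} ≤ y] * P[X_0 ≤ y / q] ^ k`, and a union
bound over the `q` blocks gives the estimate.
-/

open MeasureTheory ProbabilityTheory Finset
open scoped ENNReal

namespace Finset

theorem sum_range_sum_Ico_mul {M : Type*} [AddCommMonoid M] (f : ℕ → M) (k q : ℕ) :
    ∑ j ∈ range q, ∑ i ∈ Ico (j * k) ((j + 1) * k), f i = ∑ i ∈ range (q * k), f i := by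
  induction q with
  | zero => simp
  | succ q ih =>
    rw [sum_range_succ, ih, sum_range_add_sum_Ico _ (Nat.mul_le_mul_right k q.le_succ)]

theorem exists_sum_Ico_mul_le_div {f : ℕ → ℝ} (hf : ∀ i, 0 ≤ f i) {k q n : ℕ} (hq : 0 < q)
    (hqn : q * k ≤ n) {y : ℝ} (h : ∑ i ∈ range n, f i ≤ y) :
    ∃ j < q, ∑ i ∈ Ico (j * k) ((j + 1) * k), f i ≤ y / q := by
  have hblocks : ∑ j ∈ range q, ∑ i ∈ Ico (j * k) ((j + 1) * k), f i ≤ ∑ _j ∈ range q, y / q := by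
    rw [sum_range_sum_Ico_mul, sum_const, card_range, nsmul_eq_mul,
      mul_div_cancel₀ _ (by positivity)]
    exact (sum_le_sum_of_subset_of_nonneg (range_subset_range.2 hqn) fun i _ _ => hf i).trans h
  simpa using exists_le_of_sum_le (nonempty_range_iff.2 hq.ne') hblocks

end Finset

theorem setOf_sum_range_le_subset_iUnion_blocks {Ω : Type*} {X : ℕ → Ω → ℝ}
    (hnonneg : ∀ i ω, 0 ≤ X i ω) {k q n : ℕ} (hq : 0 < q) (hqn : q * k ≤ n) (y : ℝ) :
    {ω | ∑ i ∈ range n, X i ω ≤ y} ⊆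
      ⋃ j ∈ range q, (⋂ i ∈ Ico (j * k) ((j + 1) * k), X i ⁻¹' Set.Iic (y / q)) ∩
        {ω | ∑ i ∈ range n \ Ico (j * k) ((j + 1) * k), X i ω ∈ Set.Iic y} := by
  intro ω hω
  obtain ⟨j, hj, hblock⟩ := exists_sum_Ico_mul_le_div (hnonneg · ω) hq hqn hω
  refine Set.mem_biUnion (mem_range.2 hj) ⟨Set.mem_iInter₂.2 fun i hi => ?_, ?_⟩
  · exact (single_le_sum (fun i _ => hnonneg i ω) hi).trans hblock
  · exact (sum_le_sum_of_subset_of_nonneg sdiff_subset fun i _ _ => hnonneg i ω).trans hω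

namespace ProbabilityTheory

variable {Ω E : Type*} [MeasurableSpace Ω] [MeasurableSpace E] {P : Measure Ω} {X : ℕ → Ω → E}

theorem iIndepFun.identDistrib_sum_range_card [AddCommMonoid E] [MeasurableAdd₂ E]
    (hindep : iIndepFun X P) (hident : ∀ i, IdentDistrib (X i) (X 0) P P) (s : Finset ℕ) :
    IdentDistrib (fun ω => ∑ i ∈ s, X i ω) (fun ω => ∑ i ∈ range #s, X i ω) P P := by
  let e := s.orderIsoOfFin rfl
  have hpi : IdentDistrib (fun ω (i : Fin #s) => X (e i) ω) (fun ω i => X i ω) P P :=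
    .pi (fun i => (hident _).trans (hident _).symm)
      (hindep.precomp (Subtype.val_injective.comp e.injective)) (hindep.precomp Fin.val_injective)
  convert hpi.comp (measurable_sum univ fun i _ => measurable_pi_apply i) using 1
  · ext ω
    simp only [Function.comp_apply]
    rw [← sum_coe_sort s, ← e.toEquiv.sum_comp]
    rfl
  · ext ω
    simp [Fin.sum_univ_eq_sum_range (X · ω)]

theorem iIndepFun.measure_biInter_preimage_eq_pow (hindep : iIndepFun X P)
    (hident : ∀ i, IdentDistrib (X i) (X 0) P P) (B : Finset ℕ) {A : Set E}
    (hA : MeasurableSet A) :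
    P (⋂ i ∈ B, X i ⁻¹' A) = P (X 0 ⁻¹' A) ^ #B := by
  rw [hindep.meas_biInter fun i _ => ⟨A, hA, rfl⟩,
    prod_congr rfl fun i _ => (hident i).measure_mem_eq hA, prod_const]

theorem iIndepFun.measure_biInter_preimage_inter_sum_mem [AddCommMonoid E] [MeasurableAdd₂ E]
    (hindep : iIndepFun X P) (hident : ∀ i, IdentDistrib (X i) (X 0) P P) {B T : Finset ℕ}
    (hBT : Disjoint B T) {A U : Set E} (hA : MeasurableSet A) (hU : MeasurableSet U) :
    P ((⋂ i ∈ B, X i ⁻¹' A) ∩ {ω | ∑ i ∈ T, X i ω ∈ U})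
      = P {ω | ∑ i ∈ range #T, X i ω ∈ U} * P (X 0 ⁻¹' A) ^ #B := by
  have hmul := (hindep.indepFun_finset₀ B T hBT fun i => (hident i).aemeasurable_fst)
    |>.measure_inter_preimage_eq_mul (⋂ i : B, (fun v => v i) ⁻¹' A) ((fun v => ∑ i, v i) ⁻¹' U)
      (.iInter fun i => measurable_pi_apply i hA)
      ((measurable_sum _ fun i _ => measurable_pi_apply i) hU)
  have hsetB : (fun ω (i : B) => X i ω) ⁻¹' (⋂ i : B, (fun v => v i) ⁻¹' A)
      = ⋂ i ∈ B, X i ⁻¹' A := by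
    ext; simp
  have hsetT : (fun ω (i : T) => X i ω) ⁻¹' ((fun v => ∑ i, v i) ⁻¹' U)
      = {ω | ∑ i ∈ T, X i ω ∈ U} := by
    ext ω; simp only [Set.mem_preimage, Set.mem_ofPred_eq, sum_coe_sort T (X · ω)]
  rw [hsetB, hsetT] at hmul
  rw [hmul, hindep.measure_biInter_preimage_eq_pow hident B hA, mul_comm]
  exact congrArg (· * _) ((hindep.identDistrib_sum_range_card hident T).measure_mem_eq hU)

theorem iIndepFun.measure_sum_range_le_le_of_mul_le {X : ℕ → Ω → ℝ} (hindep : iIndepFun X P)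
    (hident : ∀ i, IdentDistrib (X i) (X 0) P P) (hnonneg : ∀ i ω, 0 ≤ X i ω) {k q n : ℕ}
    (hq : 0 < q) (hqn : q * k ≤ n) (y : ℝ) :
    P {ω | ∑ i ∈ range n, X i ω ≤ y} ≤
      q * P {ω | ∑ i ∈ range (n - k), X i ω ≤ y} * P {ω | X 0 ω ≤ y / q} ^ k := by
  have hblock : ∀ j < q, P ((⋂ i ∈ Ico (j * k) ((j + 1) * k), X i ⁻¹' Set.Iic (y / q)) ∩
        {ω | ∑ i ∈ range n \ Ico (j * k) ((j + 1) * k), X i ω ∈ Set.Iic y})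
      = P {ω | ∑ i ∈ range (n - k), X i ω ≤ y} * P {ω | X 0 ω ≤ y / q} ^ k := by
    intro j hj
    have hsub : Ico (j * k) ((j + 1) * k) ⊆ range n := by
      rw [range_eq_Ico]
      exact Ico_subset_Ico (Nat.zero_le _) ((Nat.mul_le_mul_right k hj).trans hqn)
    have hcard : #(Ico (j * k) ((j + 1) * k)) = k := by
      rw [Nat.card_Ico, add_mul, one_mul, Nat.add_sub_cancel_left]
    rw [hindep.measure_biInter_preimage_inter_sum_mem hident disjoint_sdiff measurableSet_Iic
      measurableSet_Iic, card_sdiff_of_subset hsub, hcard, card_range]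
    rfl
  calc P {ω | ∑ i ∈ range n, X i ω ≤ y}
      ≤ ∑ j ∈ range q, P ((⋂ i ∈ Ico (j * k) ((j + 1) * k), X i ⁻¹' Set.Iic (y / q)) ∩
          {ω | ∑ i ∈ range n \ Ico (j * k) ((j + 1) * k), X i ω ∈ Set.Iic y}) :=
        (measure_mono (setOf_sum_range_le_subset_iUnion_blocks hnonneg hq hqn y)).trans
          (measure_biUnion_finset_le _ _)
    _ = q * P {ω | ∑ i ∈ range (n - k), X i ω ≤ y} * P {ω | X 0 ω ≤ y / q} ^ k := by
        rw [sum_congr rfl fun j hj => hblock j (mem_range.1 hj), sum_const, card_range,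
          nsmul_eq_mul, mul_assoc]

end ProbabilityTheory

theorem stmt5_general
    {Ω : Type*} [MeasurableSpace Ω] (P : Measure Ω)
    (X : ℕ → Ω → ℝ)
    (hindep : iIndepFun X P)
    (hident : ∀ i, IdentDistrib (X i) (X 0) P P)
    (hnonneg : ∀ i ω, 0 ≤ X i ω)
    (α : ℝ) (hα : 0 < α)
    (x xmin : ℝ) :
    ∀ n : ℕ, Nat.ceil (1 / α) < n →
      P {ω | ∑ i ∈ Finset.range n, X i ω ≤ x - xmin} ≤
        ((n / Nat.ceil (1 / α) : ℕ) : ℝ≥0∞)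
          * P {ω | ∑ i ∈ Finset.range (n - Nat.ceil (1 / α)), X i ω ≤ x - xmin}
          * P {ω | X 0 ω ≤ (x - xmin) / ((n / Nat.ceil (1 / α) : ℕ) : ℝ)}
              ^ (Nat.ceil (1 / α)) := by
  intro n hn
  have hk : 0 < Nat.ceil (1 / α) := Nat.ceil_pos.2 (by positivity)
  exact hindep.measure_sum_range_le_le_of_mul_le hident hnonneg (Nat.div_pos hn.le hk)
    (Nat.div_mul_le_self n _) (x - xmin)

theorem stmt5
    {Ω : Type*} [MeasurableSpace Ω] (P : Measure Ω) [IsProbabilityMeasure P]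
    (X : ℕ → Ω → ℝ)
    (hmeas : ∀ i, Measurable (X i))
    (hindep : iIndepFun X P)
    (hident : ∀ i, IdentDistrib (X i) (X 0) P P)
    (hnonneg : ∀ i ω, 0 ≤ X i ω)
    (hzero : P {ω | X 0 ω = 0} = 0)
    (α C : ℝ) (hα : 0 < α)
    (hO : ∃ δ > 0, ∀ t : ℝ, 0 < t → t ≤ δ →
      (P {ω | X 0 ω ≤ t}).toReal ≤ C * t ^ α)
    (x xmin : ℝ) (hxmin : 0 < xmin) (hxx : xmin < x) :
    ∀ n : ℕ, Nat.ceil (1 / α) < n →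
      P {ω | ∑ i ∈ Finset.range n, X i ω ≤ x - xmin} ≤
        ((n / Nat.ceil (1 / α) : ℕ) : ℝ≥0∞)
          * P {ω | ∑ i ∈ Finset.range (n - Nat.ceil (1 / α)), X i ω ≤ x - xmin}
          * P {ω | X 0 ω ≤ (x - xmin) / ((n / Nat.ceil (1 / α) : ℕ) : ℝ)}
              ^ (Nat.ceil (1 / α)) :=
  stmt5_general P X hindep hident hnonneg α hα x xmin
end

section
/- Let f be a positive function on a right neighborhood of 0, regularly varying at 0 with index β ∈ ℝ (i.e., f(x) = x^β L(x) with L slowly varying at 0), of class C^1 on (0, ∞), with f' monotone and f nonvanishing in a neighborhood of 0. Then lim_{x→0+} x f'(x)/f(x) = β. -/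
/-!
For fixed `t > 0`, regular variation gives `f (t x) / f x → t ^ β` as `x → 0+`, i.e. the
normalised secant slope `x · slope f x (t x) / f x = (f (t x) / f x - 1) / (t - 1)` tends to
`(t ^ β - 1) / (t - 1)`. Monotonicity of `f'` makes `f` convex or concave near `0`, so this
secant slope bounds `x f'(x) / f(x)` from one side for `t > 1` and from the other for `t < 1`.
Letting `t → 1` squeezes `x f'(x) / f(x)` to the derivative of `t ↦ t ^ β` at `1`, namely `β`.
-/

open Filter Set
open scoped Topology

lemma tendsto_of_bracket {ι : Type*} {l : Filter ι} {g : ι → ℝ} {Q : ℝ → ι → ℝ} {q : ℝ → ℝ}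
    {β : ℝ} {l₁ l₂ : Filter ℝ} [l₁.NeBot] [l₂.NeBot]
    (h₁ : Tendsto q l₁ (𝓝 β)) (h₂ : Tendsto q l₂ (𝓝 β))
    (hQ₁ : ∀ᶠ t in l₁, Tendsto (Q t) l (𝓝 (q t)) ∧ g ≤ᶠ[l] Q t)
    (hQ₂ : ∀ᶠ t in l₂, Tendsto (Q t) l (𝓝 (q t)) ∧ Q t ≤ᶠ[l] g) :
    Tendsto g l (𝓝 β) := by
  refine tendsto_order.2 ⟨fun b hb => ?_, fun b hb => ?_⟩
  · obtain ⟨t, hqt, hQt, hle⟩ := ((h₂.eventually_const_lt hb).and hQ₂).exists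
    filter_upwards [hQt.eventually_const_lt hqt, hle] with x h1 h2 using h1.trans_le h2
  · obtain ⟨t, hqt, hQt, hle⟩ := ((h₁.eventually_lt_const hb).and hQ₁).exists
    filter_upwards [hQt.eventually_lt_const hqt, hle] with x h1 h2 using h2.trans_lt h1

lemma tendsto_rpow_sub_one_div_sub_one (β : ℝ) :
    Tendsto (fun t : ℝ => (t ^ β - 1) / (t - 1)) (𝓝[≠] 1) (𝓝 β) := by
  have h := Real.hasDerivAt_rpow_const (x := 1) (p := β) (Or.inl one_ne_zero)
  rw [Real.one_rpow, mul_one] at h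
  refine (hasDerivAt_iff_tendsto_slope.1 h).congr fun t => ?_
  simp [slope_def_field]

lemma tendsto_comp_mul_div_of_eq_rpow_mul {f L : ℝ → ℝ} {β t : ℝ} (ht : 0 < t)
    (hL : ∀ᶠ x in 𝓝[>] 0, L x ≠ 0)
    (hLt : Tendsto (fun x => L (t * x) / L x) (𝓝[>] 0) (𝓝 1))
    (hfL : ∀ᶠ x in 𝓝[>] 0, f x = x ^ β * L x) :
    Tendsto (fun x => f (t * x) / f x) (𝓝[>] 0) (𝓝 (t ^ β)) := by
  have hlim := (tendsto_const_nhds (x := t ^ β)).mul hLt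
  rw [mul_one] at hlim
  refine hlim.congr' ?_
  filter_upwards [self_mem_nhdsWithin, hL, hfL, eventually_nhdsGT_zero_mul_left ht hfL]
    with x (hx : 0 < x) hLx hfx hftx
  rw [hfx, hftx, Real.mul_rpow ht.le hx.le]
  field_simp [(Real.rpow_pos_of_pos hx β).ne']

lemma mul_slope_mul_div_eq {f : ℝ → ℝ} {x : ℝ} (t : ℝ) (hx : x ≠ 0) (hfx : f x ≠ 0) :
    x * slope f x (t * x) / f x = (f (t * x) / f x - 1) / (t - 1) := by
  rcases eq_or_ne t 1 with rfl | ht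
  · simp
  rw [slope_def_field, ← sub_one_mul]
  field_simp [sub_ne_zero.2 ht]

lemma tendsto_mul_slope_mul_div {f : ℝ → ℝ} {β : ℝ} (t : ℝ)
    (hf : ∀ᶠ x in 𝓝[>] 0, f x ≠ 0)
    (hratio : Tendsto (fun x => f (t * x) / f x) (𝓝[>] 0) (𝓝 (t ^ β))) :
    Tendsto (fun x => x * slope f x (t * x) / f x) (𝓝[>] 0) (𝓝 ((t ^ β - 1) / (t - 1))) := by
  refine ((hratio.sub_const 1).div_const (t - 1)).congr' ?_
  filter_upwards [self_mem_nhdsWithin, hf] with x (hx : 0 < x) hfx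
  exact (mul_slope_mul_div_eq t hx.ne' hfx).symm

section NearZero

variable {f : ℝ → ℝ} {r β : ℝ}

lemma ConvexOn.tendsto_mul_deriv_div (hr : 0 < r) (hconv : ConvexOn ℝ (Ioo 0 r) f)
    (hfd : DifferentiableOn ℝ f (Ioo 0 r)) (hpos : ∀ x ∈ Ioo 0 r, 0 < f x)
    (hratio : ∀ t > 0, Tendsto (fun x => f (t * x) / f x) (𝓝[>] 0) (𝓝 (t ^ β))) :
    Tendsto (fun x => x * deriv f x / f x) (𝓝[>] 0) (𝓝 β) := by
  have hf : ∀ᶠ x in 𝓝[>] 0, f x ≠ 0 :=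
    eventually_of_mem (Ioo_mem_nhdsGT hr) fun x hx => (hpos x hx).ne'
  have hQ (t : ℝ) (ht : 0 < t) := tendsto_mul_slope_mul_div t hf (hratio t ht)
  refine tendsto_of_bracket (Q := fun t x => x * slope f x (t * x) / f x)
    ((tendsto_rpow_sub_one_div_sub_one β).mono_left (nhdsGT_le_nhdsNE 1))
    ((tendsto_rpow_sub_one_div_sub_one β).mono_left (nhdsLT_le_nhdsNE 1)) ?_ ?_
  · filter_upwards [self_mem_nhdsWithin] with t (ht : 1 < t)
    refine ⟨hQ t (zero_lt_one.trans ht), ?_⟩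
    filter_upwards [Ioo_mem_nhdsGT hr,
      eventually_nhdsGT_zero_mul_left (zero_lt_one.trans ht) (Ioo_mem_nhdsGT hr)] with x hx htx
    have hslope := hconv.deriv_le_slope hx htx (lt_mul_of_one_lt_left hx.1 ht)
      (hfd.differentiableAt (isOpen_Ioo.mem_nhds hx))
    exact div_le_div_of_nonneg_right (mul_le_mul_of_nonneg_left hslope hx.1.le) (hpos x hx).le
  · filter_upwards [self_mem_nhdsWithin, Ioo_mem_nhdsLT one_pos] with t (ht : t < 1) ht0
    refine ⟨hQ t ht0.1, ?_⟩
    filter_upwards [Ioo_mem_nhdsGT hr,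
      eventually_nhdsGT_zero_mul_left ht0.1 (Ioo_mem_nhdsGT hr)] with x hx htx
    have hslope := hconv.slope_le_deriv htx hx (mul_lt_of_lt_one_left hx.1 ht)
      (hfd.differentiableAt (isOpen_Ioo.mem_nhds hx))
    rw [slope_comm] at hslope
    exact div_le_div_of_nonneg_right (mul_le_mul_of_nonneg_left hslope hx.1.le) (hpos x hx).le

lemma ConcaveOn.tendsto_mul_deriv_div (hr : 0 < r) (hconc : ConcaveOn ℝ (Ioo 0 r) f)
    (hfd : DifferentiableOn ℝ f (Ioo 0 r)) (hpos : ∀ x ∈ Ioo 0 r, 0 < f x)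
    (hratio : ∀ t > 0, Tendsto (fun x => f (t * x) / f x) (𝓝[>] 0) (𝓝 (t ^ β))) :
    Tendsto (fun x => x * deriv f x / f x) (𝓝[>] 0) (𝓝 β) := by
  have hf : ∀ᶠ x in 𝓝[>] 0, f x ≠ 0 :=
    eventually_of_mem (Ioo_mem_nhdsGT hr) fun x hx => (hpos x hx).ne'
  have hQ (t : ℝ) (ht : 0 < t) := tendsto_mul_slope_mul_div t hf (hratio t ht)
  refine tendsto_of_bracket (Q := fun t x => x * slope f x (t * x) / f x)
    ((tendsto_rpow_sub_one_div_sub_one β).mono_left (nhdsLT_le_nhdsNE 1))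
    ((tendsto_rpow_sub_one_div_sub_one β).mono_left (nhdsGT_le_nhdsNE 1)) ?_ ?_
  · filter_upwards [self_mem_nhdsWithin, Ioo_mem_nhdsLT one_pos] with t (ht : t < 1) ht0
    refine ⟨hQ t ht0.1, ?_⟩
    filter_upwards [Ioo_mem_nhdsGT hr,
      eventually_nhdsGT_zero_mul_left ht0.1 (Ioo_mem_nhdsGT hr)] with x hx htx
    have hslope := hconc.deriv_le_slope htx hx (mul_lt_of_lt_one_left hx.1 ht)
      (hfd.differentiableAt (isOpen_Ioo.mem_nhds hx))
    rw [slope_comm] at hslope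
    exact div_le_div_of_nonneg_right (mul_le_mul_of_nonneg_left hslope hx.1.le) (hpos x hx).le
  · filter_upwards [self_mem_nhdsWithin] with t (ht : 1 < t)
    refine ⟨hQ t (zero_lt_one.trans ht), ?_⟩
    filter_upwards [Ioo_mem_nhdsGT hr,
      eventually_nhdsGT_zero_mul_left (zero_lt_one.trans ht) (Ioo_mem_nhdsGT hr)] with x hx htx
    have hslope := hconc.slope_le_deriv hx htx (lt_mul_of_one_lt_left hx.1 ht)
      (hfd.differentiableAt (isOpen_Ioo.mem_nhds hx))
    exact div_le_div_of_nonneg_right (mul_le_mul_of_nonneg_left hslope hx.1.le) (hpos x hx).le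

end NearZero

theorem stmt7
    (β : ℝ) (f : ℝ → ℝ)
    (hreg : ∃ a > (0 : ℝ), ∃ L : ℝ → ℝ,
      (∀ x ∈ Ioc (0 : ℝ) a, 0 < L x) ∧ Measurable L ∧
      (∀ l : ℝ, 0 < l →
        Tendsto (fun x => L (l * x) / L x) (𝓝[>] (0 : ℝ)) (nhds 1)) ∧
      ∀ x ∈ Ioc (0 : ℝ) a, f x = x ^ β * L x)
    (hC1 : ContDiffOn ℝ 1 f (Ioi 0))
    (hmono : ∃ ε > (0 : ℝ),
      MonotoneOn (deriv f) (Ioo 0 ε) ∨ AntitoneOn (deriv f) (Ioo 0 ε))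
    (hpos : ∃ ε > (0 : ℝ), ∀ x ∈ Ioo (0 : ℝ) ε, 0 < f x) :
    Tendsto (fun x : ℝ => x * deriv f x / f x) (𝓝[>] (0 : ℝ)) (nhds β) := by
  obtain ⟨a, ha, L, hLpos, -, hLslow, hfL⟩ := hreg
  obtain ⟨ε, hε, hmono⟩ := hmono
  obtain ⟨δ, hδ, hpos⟩ := hpos
  have hratio (t : ℝ) (ht : 0 < t) :
      Tendsto (fun x => f (t * x) / f x) (𝓝[>] 0) (𝓝 (t ^ β)) :=
    tendsto_comp_mul_div_of_eq_rpow_mul ht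
      (eventually_of_mem (Ioc_mem_nhdsGT ha) fun x hx => (hLpos x hx).ne')
      (hLslow t ht) (eventually_of_mem (Ioc_mem_nhdsGT ha) hfL)
  have hr : 0 < min ε δ := lt_min hε hδ
  have hsub : Ioo 0 (min ε δ) ⊆ Ioo 0 ε := Ioo_subset_Ioo_right (min_le_left _ _)
  have hfd : DifferentiableOn ℝ f (Ioo 0 (min ε δ)) :=
    (hC1.differentiableOn one_ne_zero).mono Ioo_subset_Ioi_self
  have hfpos : ∀ x ∈ Ioo 0 (min ε δ), 0 < f x :=
    fun x hx => hpos x ⟨hx.1, hx.2.trans_le (min_le_right _ _)⟩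
  rcases hmono with hmono | hanti
  · have hconv : ConvexOn ℝ (Ioo 0 (min ε δ)) f := by
      refine MonotoneOn.convexOn_of_deriv (convex_Ioo 0 _) hfd.continuousOn ?_ ?_ <;>
        rw [interior_Ioo]
      exacts [hfd, hmono.mono hsub]
    exact hconv.tendsto_mul_deriv_div hr hfd hfpos hratio
  · have hconc : ConcaveOn ℝ (Ioo 0 (min ε δ)) f := by
      refine AntitoneOn.concaveOn_of_deriv (convex_Ioo 0 _) hfd.continuousOn ?_ ?_ <;>
        rw [interior_Ioo]
      exacts [hfd, hanti.mono hsub]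
    exact hconc.tendsto_mul_deriv_div hr hfd hfpos hratio
end

section
/- Let f be regularly varying at 0 with index β, of class C^1 with f' monotone and f > 0 in a neighborhood of 0. Then for any θ ∈ ℝ with θ + β > 0, the map x ↦ x^θ f(x) is non-decreasing in a neighborhood of 0, and for θ + β < 0 it is non-increasing in a neighborhood of 0. -/
open Filter Set
open scoped Topology

/-!
Since `f'` is monotone, `f` is convex (or concave) near `0`, and its tangent at `x` gives
`(l - 1) x f'(x) ≤ f(l x) - f(x)` (or the reverse). Divide by `f(x) > 0` and use
`f(l x) / f(x) → l^β`: whenever `l^β - 1 < (l - 1) c`, eventually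
`(l - 1) x f'(x) / f(x) < (l - 1) c`.
Taking `l > 1` and `l < 1` close to `1`, where `(l^β - 1) / (l - 1) ≈ β`, this bounds
`x f'(x) / f(x)` above by any `c > β` and below by any `c < β`, so `x f'(x) / f(x) → β`.
Hence `(x^θ f(x))' = x^(θ-1) f(x) (θ + x f'(x) / f(x))` eventually has the sign of `θ + β`.
-/

theorem ConvexOn.add_deriv_mul_sub_le {S : Set ℝ} {f : ℝ → ℝ} {x y : ℝ}
    (hfc : ConvexOn ℝ S f) (hx : x ∈ S) (hy : y ∈ S) (hfd : DifferentiableAt ℝ f x) :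
    f x + deriv f x * (y - x) ≤ f y := by
  rcases lt_trichotomy x y with hxy | rfl | hxy
  · have h := hfc.deriv_le_slope hx hy hxy hfd
    rw [slope_def_field, le_div_iff₀ (sub_pos.2 hxy)] at h
    linarith
  · simp
  · have h := hfc.slope_le_deriv hy hx hxy hfd
    rw [slope_def_field, div_le_iff₀ (sub_pos.2 hxy)] at h
    linarith

theorem ConcaveOn.le_add_deriv_mul_sub {S : Set ℝ} {f : ℝ → ℝ} {x y : ℝ}
    (hfc : ConcaveOn ℝ S f) (hx : x ∈ S) (hy : y ∈ S) (hfd : DifferentiableAt ℝ f x) :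
    f y ≤ f x + deriv f x * (y - x) := by
  have h := hfc.neg.add_deriv_mul_sub_le hx hy hfd.neg
  rw [deriv.neg] at h
  simp only [Pi.neg_apply] at h
  linarith

theorem tendsto_of_sub_one_mul_le {α : Type*} {F : Filter α} {g : α → ℝ} {r : ℝ → α → ℝ}
    {φ : ℝ → ℝ} {d : ℝ} (hφ : HasDerivAt φ d 1) (hφ₁ : φ 1 = 0)
    (hr : ∀ᶠ l in 𝓝 1, Tendsto (r l) F (𝓝 (φ l)))
    (hle : ∀ᶠ l in 𝓝 1, ∀ᶠ x in F, (l - 1) * g x ≤ r l x) :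
    Tendsto g F (𝓝 d) := by
  have hslope : Tendsto (fun l => φ l / (l - 1)) (𝓝[≠] 1) (𝓝 d) := by
    refine ((hasDerivAt_iff_tendsto_slope).1 hφ).congr fun l => ?_
    rw [slope_def_field, hφ₁, sub_zero]
  have hr' : ∀ s : Set ℝ, ∀ᶠ l in 𝓝[s] 1, Tendsto (r l) F (𝓝 (φ l)) ∧
      ∀ᶠ x in F, (l - 1) * g x ≤ r l x := fun s =>
    (hr.and hle).filter_mono nhdsWithin_le_nhds
  refine tendsto_order.2 ⟨fun c hc => ?_, fun c hc => ?_⟩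
  · have hev : ∀ᶠ l in 𝓝[<] 1, c < φ l / (l - 1) ∧ l < 1 ∧ Tendsto (r l) F (𝓝 (φ l)) ∧
        ∀ᶠ x in F, (l - 1) * g x ≤ r l x :=
      ((hslope.mono_left (nhdsWithin_mono _ fun _ h => ne_of_lt h)).eventually
        (lt_mem_nhds hc)).and (Eventually.and self_mem_nhdsWithin (hr' _))
    obtain ⟨l, hcl, hl1, hrl, hlel⟩ := hev.exists
    have hφl : φ l < (l - 1) * c := by
      rwa [lt_div_iff_of_neg (sub_neg.2 hl1), mul_comm] at hcl
    filter_upwards [hlel, hrl.eventually (gt_mem_nhds hφl)] with x hx hrx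
    nlinarith
  · have hev : ∀ᶠ l in 𝓝[>] 1, φ l / (l - 1) < c ∧ 1 < l ∧ Tendsto (r l) F (𝓝 (φ l)) ∧
        ∀ᶠ x in F, (l - 1) * g x ≤ r l x :=
      ((hslope.mono_left (nhdsWithin_mono _ fun _ h => ne_of_gt h)).eventually
        (gt_mem_nhds hc)).and (Eventually.and self_mem_nhdsWithin (hr' _))
    obtain ⟨l, hcl, hl1, hrl, hlel⟩ := hev.exists
    have hφl : φ l < (l - 1) * c := by
      rwa [div_lt_iff₀ (sub_pos.2 hl1), mul_comm] at hcl
    filter_upwards [hlel, hrl.eventually (gt_mem_nhds hφl)] with x hx hrx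
    nlinarith

theorem eventually_mem_Ioo_and_mul_mem_Ioo {ε l : ℝ} (hε : 0 < ε) (hl : 0 < l) :
    ∀ᶠ x in 𝓝[>] 0, x ∈ Ioo 0 ε ∧ l * x ∈ Ioo 0 ε :=
  Eventually.and (Ioo_mem_nhdsGT hε) (eventually_nhdsGT_zero_mul_left hl (Ioo_mem_nhdsGT hε))

theorem tendsto_div_of_eq_rpow_mul {f L : ℝ → ℝ} {a β l : ℝ} (ha : 0 < a) (hl : 0 < l)
    (hfL : ∀ x ∈ Ioc 0 a, f x = x ^ β * L x)
    (hL : Tendsto (fun x => L (l * x) / L x) (𝓝[>] 0) (𝓝 1)) :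
    Tendsto (fun x => f (l * x) / f x) (𝓝[>] 0) (𝓝 (l ^ β)) := by
  refine (show Tendsto (fun x => l ^ β * (L (l * x) / L x)) _ _ by
    simpa using hL.const_mul (l ^ β)).congr' ?_
  filter_upwards [eventually_mem_Ioo_and_mul_mem_Ioo ha hl] with x ⟨hx, hlx⟩
  rw [hfL x (Ioo_subset_Ioc_self hx), hfL _ (Ioo_subset_Ioc_self hlx),
    Real.mul_rpow hl.le hx.1.le, mul_assoc, mul_left_comm,
    mul_div_mul_left _ _ (Real.rpow_pos_of_pos hx.1 β).ne', mul_div_assoc]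

section LogDeriv

variable {f : ℝ → ℝ} {β ε : ℝ}

theorem tendsto_mul_deriv_div_of_convexOn (hε : 0 < ε) (hfc : ConvexOn ℝ (Ioo 0 ε) f)
    (hfd : DifferentiableOn ℝ f (Ioo 0 ε)) (hpos : ∀ᶠ x in 𝓝[>] 0, 0 < f x)
    (hratio : ∀ l > 0, Tendsto (fun x => f (l * x) / f x) (𝓝[>] 0) (𝓝 (l ^ β))) :
    Tendsto (fun x => x * deriv f x / f x) (𝓝[>] 0) (𝓝 β) := by
  refine tendsto_of_sub_one_mul_le (r := fun l x => f (l * x) / f x - 1)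
    (φ := fun l => l ^ β - 1)
    (by simpa using (Real.hasDerivAt_rpow_const (p := β) (Or.inl one_ne_zero)).sub_const 1)
    (by simp) ?_ ?_
  · filter_upwards [lt_mem_nhds one_pos] with l hl using (hratio l hl).sub_const 1
  filter_upwards [lt_mem_nhds one_pos] with l hl
  filter_upwards [hpos, eventually_mem_Ioo_and_mul_mem_Ioo hε hl] with x hfx ⟨hx, hlx⟩
  have := hfc.add_deriv_mul_sub_le hx hlx (hfd.differentiableAt (isOpen_Ioo.mem_nhds hx))
  rw [show (l - 1) * (x * deriv f x / f x) = deriv f x * (l * x - x) / f x by ring,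
    div_sub_one hfx.ne']
  exact div_le_div_of_nonneg_right (by linarith) hfx.le

theorem tendsto_mul_deriv_div_of_concaveOn (hε : 0 < ε) (hfc : ConcaveOn ℝ (Ioo 0 ε) f)
    (hfd : DifferentiableOn ℝ f (Ioo 0 ε)) (hpos : ∀ᶠ x in 𝓝[>] 0, 0 < f x)
    (hratio : ∀ l > 0, Tendsto (fun x => f (l * x) / f x) (𝓝[>] 0) (𝓝 (l ^ β))) :
    Tendsto (fun x => x * deriv f x / f x) (𝓝[>] 0) (𝓝 β) := by
  suffices h : Tendsto (fun x => -(x * deriv f x / f x)) (𝓝[>] 0) (𝓝 (-β)) by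
    simpa using h.neg
  refine tendsto_of_sub_one_mul_le (r := fun l x => 1 - f (l * x) / f x)
    (φ := fun l => 1 - l ^ β)
    (by simpa using ((Real.hasDerivAt_rpow_const (p := β) (Or.inl one_ne_zero)).const_sub 1))
    (by simp) ?_ ?_
  · filter_upwards [lt_mem_nhds one_pos] with l hl using (hratio l hl).const_sub 1
  filter_upwards [lt_mem_nhds one_pos] with l hl
  filter_upwards [hpos, eventually_mem_Ioo_and_mul_mem_Ioo hε hl] with x hfx ⟨hx, hlx⟩
  have := hfc.le_add_deriv_mul_sub hx hlx (hfd.differentiableAt (isOpen_Ioo.mem_nhds hx))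
  rw [show (l - 1) * -(x * deriv f x / f x) = -(deriv f x * (l * x - x)) / f x by ring,
    one_sub_div hfx.ne']
  exact div_le_div_of_nonneg_right (by linarith) hfx.le

theorem tendsto_mul_deriv_div_of_monotoneOn_or_antitoneOn (hε : 0 < ε)
    (hfd : DifferentiableOn ℝ f (Ioo 0 ε))
    (hf' : MonotoneOn (deriv f) (Ioo 0 ε) ∨ AntitoneOn (deriv f) (Ioo 0 ε))
    (hpos : ∀ᶠ x in 𝓝[>] 0, 0 < f x)
    (hratio : ∀ l > 0, Tendsto (fun x => f (l * x) / f x) (𝓝[>] 0) (𝓝 (l ^ β))) :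
    Tendsto (fun x => x * deriv f x / f x) (𝓝[>] 0) (𝓝 β) := by
  have hfd' : DifferentiableOn ℝ f (interior (Ioo 0 ε)) := by rwa [interior_Ioo]
  rcases hf' with hf' | hf'
  · refine tendsto_mul_deriv_div_of_convexOn hε ?_ hfd hpos hratio
    exact MonotoneOn.convexOn_of_deriv (convex_Ioo 0 ε) hfd.continuousOn hfd'
      (by rwa [interior_Ioo])
  · refine tendsto_mul_deriv_div_of_concaveOn hε ?_ hfd hpos hratio
    exact AntitoneOn.concaveOn_of_deriv (convex_Ioo 0 ε) hfd.continuousOn hfd'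
      (by rwa [interior_Ioo])

end LogDeriv

section MonotoneNearZero

variable {g : ℝ → ℝ}

theorem exists_monotoneOn_Ioc_of_eventually_deriv_nonneg (hg : DifferentiableOn ℝ g (Ioi 0))
    (h : ∀ᶠ x in 𝓝[>] 0, 0 ≤ deriv g x) : ∃ ε > 0, MonotoneOn g (Ioc 0 ε) := by
  obtain ⟨u, hu, hsub⟩ := mem_nhdsGT_iff_exists_Ioo_subset.1 h
  refine ⟨u / 2, half_pos hu, monotoneOn_of_deriv_nonneg (convex_Ioc 0 _)
    (hg.continuousOn.mono Ioc_subset_Ioi_self) ?_ ?_⟩ <;> rw [interior_Ioc]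
  · exact hg.mono Ioo_subset_Ioi_self
  · exact fun x hx => hsub ⟨hx.1, hx.2.trans (half_lt_self hu)⟩

theorem exists_antitoneOn_Ioc_of_eventually_deriv_nonpos (hg : DifferentiableOn ℝ g (Ioi 0))
    (h : ∀ᶠ x in 𝓝[>] 0, deriv g x ≤ 0) : ∃ ε > 0, AntitoneOn g (Ioc 0 ε) := by
  obtain ⟨u, hu, hsub⟩ := mem_nhdsGT_iff_exists_Ioo_subset.1 h
  refine ⟨u / 2, half_pos hu, antitoneOn_of_deriv_nonpos (convex_Ioc 0 _)
    (hg.continuousOn.mono Ioc_subset_Ioi_self) ?_ ?_⟩ <;> rw [interior_Ioc]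
  · exact hg.mono Ioo_subset_Ioi_self
  · exact fun x hx => hsub ⟨hx.1, hx.2.trans (half_lt_self hu)⟩

end MonotoneNearZero

theorem deriv_rpow_mul_eq {f : ℝ → ℝ} {θ x : ℝ} (hx : 0 < x) (hf : DifferentiableAt ℝ f x)
    (hfx : f x ≠ 0) :
    deriv (fun y => y ^ θ * f y) x = x ^ (θ - 1) * f x * (θ + x * deriv f x / f x) := by
  rw [((Real.hasDerivAt_rpow_const (p := θ) (Or.inl hx.ne')).fun_mul hf.hasDerivAt).deriv,
    Real.rpow_sub_one hx.ne']
  field_simp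

theorem stmt8
    (β : ℝ) (f : ℝ → ℝ)
    (hreg : ∃ a > (0 : ℝ), ∃ L : ℝ → ℝ,
      (∀ x ∈ Ioc (0 : ℝ) a, 0 < L x) ∧ Measurable L ∧
      (∀ l : ℝ, 0 < l →
        Tendsto (fun x => L (l * x) / L x) (𝓝[>] (0 : ℝ)) (nhds 1)) ∧
      ∀ x ∈ Ioc (0 : ℝ) a, f x = x ^ β * L x)
    (hC1 : ContDiffOn ℝ 1 f (Ioi 0))
    (hmono : ∃ ε > (0 : ℝ),
      MonotoneOn (deriv f) (Ioo 0 ε) ∨ AntitoneOn (deriv f) (Ioo 0 ε))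
    (hpos : ∃ ε > (0 : ℝ), ∀ x ∈ Ioo (0 : ℝ) ε, 0 < f x) :
    ∀ θ : ℝ,
      (0 < θ + β →
        ∃ ε > (0 : ℝ), MonotoneOn (fun x : ℝ => x ^ θ * f x) (Ioc 0 ε)) ∧
      (θ + β < 0 →
        ∃ ε > (0 : ℝ), AntitoneOn (fun x : ℝ => x ^ θ * f x) (Ioc 0 ε)) := by
  obtain ⟨a, ha, L, -, -, hL, hfL⟩ := hreg
  obtain ⟨ε, hε, hf'⟩ := hmono
  obtain ⟨δ, hδ, hfδ⟩ := hpos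
  have hd : DifferentiableOn ℝ f (Ioi 0) := hC1.differentiableOn one_ne_zero
  have hfpos : ∀ᶠ x in 𝓝[>] 0, 0 < f x := mem_of_superset (Ioo_mem_nhdsGT hδ) hfδ
  have hlog := tendsto_mul_deriv_div_of_monotoneOn_or_antitoneOn hε
    (hd.mono Ioo_subset_Ioi_self) hf' hfpos
    fun l hl => tendsto_div_of_eq_rpow_mul ha hl hfL (hL l hl)
  intro θ
  have hg : DifferentiableOn ℝ (fun x => x ^ θ * f x) (Ioi 0) :=
    (differentiableOn_id.rpow_const fun x hx => Or.inl (ne_of_gt hx)).mul hd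
  have hderiv : ∀ᶠ x in 𝓝[>] 0, 0 < x ^ (θ - 1) * f x ∧
      deriv (fun y => y ^ θ * f y) x = x ^ (θ - 1) * f x * (θ + x * deriv f x / f x) := by
    filter_upwards [self_mem_nhdsWithin, hfpos] with x hx hfx
    exact ⟨mul_pos (Real.rpow_pos_of_pos hx _) hfx,
      deriv_rpow_mul_eq hx (hd.differentiableAt (Ioi_mem_nhds hx)) hfx.ne'⟩
  refine ⟨fun hθ => exists_monotoneOn_Ioc_of_eventually_deriv_nonneg hg ?_,
    fun hθ => exists_antitoneOn_Ioc_of_eventually_deriv_nonpos hg ?_⟩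
  · filter_upwards [hderiv, (hlog.const_add θ).eventually (lt_mem_nhds hθ)] with x ⟨hc, hx⟩ hθx
    exact hx ▸ mul_nonneg hc.le hθx.le
  · filter_upwards [hderiv, (hlog.const_add θ).eventually (gt_mem_nhds hθ)] with x ⟨hc, hx⟩ hθx
    exact hx ▸ mul_nonpos_of_nonneg_of_nonpos hc.le hθx.le
end

section
/- Let (X_n) be i.i.d. positive absolutely continuous random variables with density f, and let f_{S_n} denote the density of S_n = X_1 + ... + X_n. The following are equivalent: (i) there exist an integer N_1 ≥ 1 and ε > 0 such that f_{S_{N_1}} is non-decreasing on (0, ε]; (ii) there exist an integer N_2 ≥ 1, ε > 0, and β > −1 such that for all c ∈ (0,1) and t ∈ (0, ε], f_{S_{N_2}}(ct) ≤ c^β f_{S_{N_2}}(t). -/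
/-!
A density that is non-decreasing on `(0, ε]` satisfies `f (c t) ≤ c ^ 0 f t` there. Conversely,
if `g (c t) ≤ c ^ γ g t` on `(0, δ]` and `g` vanishes on `(-∞, 0]`, the substitution `t = c s` in
`(g ⋆ g) (c x) = ∫ g t g (c x - t) dt` only evaluates `g` at points of `(0, δ]` and yields
`(g ⋆ g) (c x) ≤ c ^ (2γ + 1) (g ⋆ g) x`. Iterating from `f^{*N}` gives the exponent
`2^k (β + 1) - 1`, which is `≥ 0` for large `k`, and a bound with nonnegative exponent is
monotonicity.

The convolutions are handled in `ℝ≥0∞`, where they are associative without integrability side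
conditions; the real `iterConv` is the `toReal` of the `ℝ≥0∞` convolution power, which is finite
almost everywhere, hence (by the scaling bound) everywhere on `(0, δ)`.
-/

open MeasureTheory Filter Set
open scoped Topology

/-- Convolution of two real functions. -/
noncomputable def conv (f g : ℝ → ℝ) : ℝ → ℝ := fun x => ∫ t, f t * g (x - t)

/-- `iterConv f n` is the `n`-fold self-convolution `f^{*n}` (for `n ≥ 1`). -/
noncomputable def iterConv (f : ℝ → ℝ) : ℕ → ℝ → ℝ
  | 0 => fun _ => 0
  | 1 => f
  | n + 2 => conv f (iterConv f (n + 1))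

open scoped ENNReal

section LConvolution

variable {G : Type*} [MeasurableSpace G] [AddGroup G]

noncomputable def lconvPow (g : G → ℝ≥0∞) (μ : Measure G) : ℕ → G → ℝ≥0∞
  | 0 => 0
  | 1 => g
  | n + 2 => g ⋆ₗ[μ] lconvPow g μ (n + 1)

theorem lconvPow_succ (g : G → ℝ≥0∞) (μ : Measure G) {n : ℕ} (hn : n ≠ 0) :
    lconvPow g μ (n + 1) = g ⋆ₗ[μ] lconvPow g μ n := by
  obtain ⟨n, rfl⟩ := Nat.exists_eq_succ_of_ne_zero hn
  rfl

variable [MeasurableAdd₂ G] [MeasurableNeg G] {μ : Measure G} [SFinite μ] {g : G → ℝ≥0∞}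

theorem measurable_lconvPow (hg : Measurable g) : ∀ n, Measurable (lconvPow g μ n)
  | 0 => measurable_const
  | 1 => hg
  | n + 2 => measurable_lconvolution μ hg (measurable_lconvPow hg (n + 1))

variable [μ.IsAddLeftInvariant]

theorem lintegral_lconvolution {f : G → ℝ≥0∞} (hf : Measurable f) (hg : Measurable g) :
    ∫⁻ x, (f ⋆ₗ[μ] g) x ∂μ = (∫⁻ x, f x ∂μ) * ∫⁻ x, g x ∂μ := by
  simp only [lconvolution_def]
  rw [lintegral_lintegral_swap (by fun_prop)]
  have inner (y : G) : ∫⁻ x, f y * g (-y + x) ∂μ = f y * ∫⁻ x, g x ∂μ := by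
    rw [lintegral_const_mul _ (by fun_prop), lintegral_add_left_eq_self]
  simp_rw [inner]
  exact lintegral_mul_const _ hf

theorem lintegral_lconvPow (hg : Measurable g) {n : ℕ} (hn : n ≠ 0) :
    ∫⁻ x, lconvPow g μ n x ∂μ = (∫⁻ x, g x ∂μ) ^ n := by
  induction n with
  | zero => exact absurd rfl hn
  | succ n ih =>
    rcases eq_or_ne n 0 with rfl | hn
    · rw [zero_add, pow_one]; rfl
    rw [lconvPow_succ g μ hn, lintegral_lconvolution hg (measurable_lconvPow hg n), ih hn,
      pow_succ']

theorem ae_lt_top_lconvPow (hg : Measurable g) (hg_fin : ∫⁻ x, g x ∂μ ≠ ∞) (n : ℕ) :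
    ∀ᵐ x ∂μ, lconvPow g μ n x < ∞ := by
  rcases eq_or_ne n 0 with rfl | hn
  · exact ae_of_all _ fun _ => ENNReal.zero_lt_top
  refine ae_lt_top (measurable_lconvPow hg n) ?_
  rw [lintegral_lconvPow hg hn]
  exact ENNReal.pow_ne_top hg_fin

theorem lconvPow_add (hg : Measurable g) {m n : ℕ} (hm : m ≠ 0) (hn : n ≠ 0) :
    lconvPow g μ (m + n) = lconvPow g μ m ⋆ₗ[μ] lconvPow g μ n := by
  induction m, Nat.one_le_iff_ne_zero.2 hm using Nat.le_induction with
  | base => rw [add_comm, lconvPow_succ g μ hn]; rfl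
  | succ m hm ih =>
    rw [add_right_comm, lconvPow_succ g μ (by omega), ih (by omega), lconvPow_succ g μ (by omega),
      lconvolution_assoc hg (measurable_lconvPow hg m) (measurable_lconvPow hg n)]

end LConvolution

theorem lconvolution_congr_ae {G : Type*} [MeasurableSpace G] [AddCommGroup G] [MeasurableAdd₂ G]
    [MeasurableNeg G] {μ : Measure G} [μ.IsAddLeftInvariant] [μ.IsNegInvariant]
    {f₁ f₂ g₁ g₂ : G → ℝ≥0∞} (hf : f₁ =ᵐ[μ] f₂) (hg : g₁ =ᵐ[μ] g₂) :
    f₁ ⋆ₗ[μ] g₁ = f₂ ⋆ₗ[μ] g₂ := by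
  have congr_left : ∀ {f f' g : G → ℝ≥0∞}, f =ᵐ[μ] f' → f ⋆ₗ[μ] g = f' ⋆ₗ[μ] g :=
    fun h => funext fun x => lintegral_congr_ae (h.mono fun y hy => by dsimp only; rw [hy])
  rw [congr_left hf, lconvolution_comm, congr_left hg, lconvolution_comm]

theorem ofReal_mul_lintegral_comp_mul_left (φ : ℝ → ℝ≥0∞) {c : ℝ} (hc : 0 < c) :
    ENNReal.ofReal c * ∫⁻ s, φ (c * s) = ∫⁻ t, φ t := by
  have hmap : ∫⁻ s, φ (c * s) = ∫⁻ t, φ t ∂(Measure.map (c * ·) volume) :=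
    (lintegral_map_equiv φ (MeasurableEquiv.mulLeft₀ c hc.ne')).symm
  rw [hmap, Real.map_volume_mul_left hc.ne', lintegral_smul_measure, smul_eq_mul, ← mul_assoc,
    ← ENNReal.ofReal_mul hc.le, abs_of_pos (inv_pos.2 hc), mul_inv_cancel₀ hc.ne',
    ENNReal.ofReal_one, one_mul]

theorem lconvolution_self_comp_mul_le {g : ℝ → ℝ≥0∞} (hg : ∀ t ≤ 0, g t = 0) {δ γ : ℝ}
    (hscale : ∀ c ∈ Ioo (0 : ℝ) 1, ∀ t ∈ Ioc 0 δ, g (c * t) ≤ ENNReal.ofReal (c ^ γ) * g t) :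
    ∀ c ∈ Ioo (0 : ℝ) 1, ∀ x ∈ Ioc 0 δ,
    (g ⋆ₗ g) (c * x) ≤ ENNReal.ofReal (c ^ (2 * γ + 1)) * (g ⋆ₗ g) x := by
  intro c hc x hx
  obtain ⟨hc0, hc1⟩ := hc
  have pointwise (s : ℝ) : g (c * s) * g (-(c * s) + c * x) ≤
      ENNReal.ofReal (c ^ γ * c ^ γ) * (g s * g (-s + x)) := by
    rw [show -(c * s) + c * x = c * (-s + x) by ring, ENNReal.ofReal_mul (by positivity)]
    rcases le_or_gt s 0 with hs | hs
    · simp [hg (c * s) (by nlinarith)]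
    rcases le_or_gt x s with hxs | hxs
    · simp [hg (c * (-s + x)) (by nlinarith)]
    calc g (c * s) * g (c * (-s + x))
        ≤ (ENNReal.ofReal (c ^ γ) * g s) * (ENNReal.ofReal (c ^ γ) * g (-s + x)) :=
          mul_le_mul' (hscale c ⟨hc0, hc1⟩ s ⟨hs, by linarith [hx.2]⟩)
            (hscale c ⟨hc0, hc1⟩ _ ⟨by linarith, by linarith [hx.2]⟩)
      _ = _ := by ring
  calc (g ⋆ₗ g) (c * x) = ENNReal.ofReal c * ∫⁻ s, g (c * s) * g (-(c * s) + c * x) :=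
        (ofReal_mul_lintegral_comp_mul_left _ hc0).symm
    _ ≤ ENNReal.ofReal c * ∫⁻ s, ENNReal.ofReal (c ^ γ * c ^ γ) * (g s * g (-s + x)) :=
        mul_le_mul_right (lintegral_mono pointwise) _
    _ = ENNReal.ofReal (c ^ (2 * γ + 1)) * (g ⋆ₗ g) x := by
        rw [lintegral_const_mul' _ _ ENNReal.ofReal_ne_top, ← mul_assoc,
          ← ENNReal.ofReal_mul hc0.le, Real.rpow_add hc0, Real.rpow_one, two_mul,
          Real.rpow_add hc0, mul_comm c, lconvolution_def]

theorem lt_top_of_ae_lt_top_of_comp_mul_le {W : ℝ → ℝ≥0∞} (hW : ∀ᵐ y, W y < ∞) {δ κ : ℝ}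
    (hscale : ∀ c ∈ Ioo (0 : ℝ) 1, ∀ y ∈ Ioc 0 δ, W (c * y) ≤ ENNReal.ofReal (c ^ κ) * W y)
    {x : ℝ} (hx : x ∈ Ioo 0 δ) : W x < ∞ := by
  have : (ae (volume.restrict (Ioc x δ))).NeBot :=
    ae_restrict_neBot.2 (by simp [hx.2])
  obtain ⟨y, hy, hWy⟩ :=
    ((ae_restrict_mem (s := Ioc x δ) measurableSet_Ioc).and (ae_restrict_of_ae hW)).exists
  have hy0 : 0 < y := hx.1.trans hy.1
  calc W x = W (x / y * y) := by rw [div_mul_cancel₀ x hy0.ne']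
    _ ≤ ENNReal.ofReal ((x / y) ^ κ) * W y :=
        hscale _ ⟨div_pos hx.1 hy0, (div_lt_one hy0).2 hy.1⟩ y ⟨hy0, hy.2⟩
    _ < ∞ := ENNReal.mul_lt_top ENNReal.ofReal_lt_top hWy

theorem conv_eq_zero_of_nonpos {f g : ℝ → ℝ} (hf : ∀ t ≤ 0, f t = 0) (hg : ∀ t ≤ 0, g t = 0)
    {x : ℝ} (hx : x ≤ 0) : conv f g x = 0 := by
  have integrand_eq_zero : (fun t => f t * g (x - t)) = 0 := by
    funext t
    rcases le_or_gt t 0 with ht | ht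
    · simp [hf t ht]
    · simp [hg (x - t) (by linarith)]
  simp [conv, integrand_eq_zero]

theorem conv_eq_toReal_lconvolution {f : ℝ → ℝ} (hf : Measurable f) (hnn : ∀ t, 0 ≤ f t)
    {H : ℝ → ℝ≥0∞} (hH : Measurable H) (hH_fin : ∀ᵐ y, H y < ∞) (x : ℝ) :
    conv f (fun y => (H y).toReal) x = (((fun t => ENNReal.ofReal (f t)) ⋆ₗ H) x).toReal := by
  have hH_fin' : ∀ᵐ t, H (x - t) < ∞ :=
    (Measure.measurePreserving_sub_left volume x).quasiMeasurePreserving.tendsto_ae.eventually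
      hH_fin
  have hnn' : ∀ᵐ t, 0 ≤ f t * (H (x - t)).toReal :=
    ae_of_all _ fun t => mul_nonneg (hnn t) ENNReal.toReal_nonneg
  rw [conv, integral_eq_lintegral_of_nonneg_ae hnn' (by fun_prop), lconvolution_def]
  congr 1
  refine lintegral_congr_ae (hH_fin'.mono fun t ht => ?_)
  dsimp only
  rw [ENNReal.ofReal_mul (hnn t), ENNReal.ofReal_toReal ht.ne, neg_add_eq_sub]

section IterConv

variable {f : ℝ → ℝ}

theorem iterConv_eq_zero_of_nonpos (hsupp : ∀ t ≤ 0, f t = 0) : ∀ n, ∀ x ≤ 0, iterConv f n x = 0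
  | 0 => fun _ _ => rfl
  | 1 => hsupp
  | n + 2 => fun _ hx =>
    conv_eq_zero_of_nonpos hsupp (iterConv_eq_zero_of_nonpos hsupp (n + 1)) hx

theorem iterConv_eq_toReal_lconvPow (hf : Measurable f) (hnn : ∀ t, 0 ≤ f t)
    (hfi : Integrable f) :
    ∀ n x, iterConv f n x = (lconvPow (fun t => ENNReal.ofReal (f t)) volume n x).toReal
  | 0, _ => rfl
  | 1, x => (ENNReal.toReal_ofReal (hnn x)).symm
  | n + 2, x => by
    have hg : Measurable fun t => ENNReal.ofReal (f t) := by fun_prop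
    show conv f (iterConv f (n + 1)) x = _
    rw [funext (iterConv_eq_toReal_lconvPow hf hnn hfi (n + 1)),
      conv_eq_toReal_lconvolution hf hnn (measurable_lconvPow hg _)
        (ae_lt_top_lconvPow hg hfi.lintegral_lt_top.ne _)]
    rfl

theorem iterConv_nonneg (hf : Measurable f) (hnn : ∀ t, 0 ≤ f t) (hfi : Integrable f)
    (n : ℕ) (x : ℝ) : 0 ≤ iterConv f n x := by
  rw [iterConv_eq_toReal_lconvPow hf hnn hfi]
  exact ENNReal.toReal_nonneg

theorem lconvolution_ofReal_iterConv (hf : Measurable f) (hnn : ∀ t, 0 ≤ f t)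
    (hfi : Integrable f) {m n : ℕ} (hm : m ≠ 0) (hn : n ≠ 0) :
    (fun t => ENNReal.ofReal (iterConv f m t)) ⋆ₗ (fun t => ENNReal.ofReal (iterConv f n t)) =
      lconvPow (fun t => ENNReal.ofReal (f t)) volume (m + n) := by
  have hg : Measurable fun t => ENNReal.ofReal (f t) := by fun_prop
  have ofReal_iterConv_ae_eq (k : ℕ) :
      (fun t => ENNReal.ofReal (iterConv f k t)) =ᵐ[volume]
        lconvPow (fun t => ENNReal.ofReal (f t)) volume k := by
    filter_upwards [ae_lt_top_lconvPow hg hfi.lintegral_lt_top.ne k] with t ht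
    rw [iterConv_eq_toReal_lconvPow hf hnn hfi, ENNReal.ofReal_toReal ht.ne]
  rw [lconvPow_add hg hm hn]
  exact lconvolution_congr_ae (ofReal_iterConv_ae_eq m) (ofReal_iterConv_ae_eq n)

end IterConv

def ScaleBound (f : ℝ → ℝ) (δ γ : ℝ) : Prop :=
  ∀ c ∈ Ioo (0 : ℝ) 1, ∀ t ∈ Ioc (0 : ℝ) δ, f (c * t) ≤ c ^ γ * f t

theorem MonotoneOn.scaleBound_zero {f : ℝ → ℝ} {δ : ℝ} (h : MonotoneOn f (Ioc 0 δ)) :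
    ScaleBound f δ 0 := by
  intro c hc t ht
  have hct : c * t ≤ t := mul_le_of_le_one_left ht.1.le hc.2.le
  rw [Real.rpow_zero, one_mul]
  exact h ⟨mul_pos hc.1 ht.1, hct.trans ht.2⟩ ht hct

namespace ScaleBound

variable {f : ℝ → ℝ} {δ γ : ℝ}

theorem monotoneOn (h : ScaleBound f δ γ) (hγ : 0 ≤ γ) (hf : ∀ t ∈ Ioc 0 δ, 0 ≤ f t) :
    MonotoneOn f (Ioc 0 δ) := by
  intro s hs t ht hst
  rcases hst.eq_or_lt with rfl | hlt
  · rfl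
  have hc : s / t ∈ Ioo (0 : ℝ) 1 := ⟨div_pos hs.1 ht.1, (div_lt_one ht.1).2 hlt⟩
  calc f s = f (s / t * t) := by rw [div_mul_cancel₀ s ht.1.ne']
    _ ≤ (s / t) ^ γ * f t := h _ hc t ht
    _ ≤ f t := mul_le_of_le_one_left (hf t ht) (Real.rpow_le_one hc.1.le hc.2.le hγ)

theorem iterConv_two_mul (hf : Measurable f) (hnn : ∀ t, 0 ≤ f t) (hsupp : ∀ t ≤ 0, f t = 0)
    (hfi : Integrable f) {m : ℕ} (hm : m ≠ 0) (h : ScaleBound (iterConv f m) δ γ) :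
    ScaleBound (iterConv f (2 * m)) (δ / 2) (2 * γ + 1) := by
  have hg : Measurable fun t => ENNReal.ofReal (f t) := by fun_prop
  -- Unlike the `ℝ≥0∞` convolution power, `G` is finite everywhere, so the real bound transfers to
  -- it; it agrees with that power almost everywhere, which is all a convolution sees.
  set G : ℝ → ℝ≥0∞ := fun t => ENNReal.ofReal (iterConv f m t)
  have hG_supp (t : ℝ) (ht : t ≤ 0) : G t = 0 := by
    simp [G, iterConv_eq_zero_of_nonpos hsupp m t ht]
  have hG_scale : ∀ c ∈ Ioo (0 : ℝ) 1, ∀ t ∈ Ioc 0 δ,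
      G (c * t) ≤ ENNReal.ofReal (c ^ γ) * G t := fun c hc t ht => by
    rw [← ENNReal.ofReal_mul (Real.rpow_nonneg hc.1.le γ)]
    exact ENNReal.ofReal_le_ofReal (h c hc t ht)
  have hGG : G ⋆ₗ G = lconvPow (fun t => ENNReal.ofReal (f t)) volume (2 * m) := by
    rw [two_mul]
    exact lconvolution_ofReal_iterConv hf hnn hfi hm hm
  have hdouble := lconvolution_self_comp_mul_le hG_supp hG_scale
  have hfin (x : ℝ) (hx : x ∈ Ioo 0 δ) : (G ⋆ₗ G) x < ∞ :=
    lt_top_of_ae_lt_top_of_comp_mul_le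
      (by rw [hGG]; exact ae_lt_top_lconvPow hg hfi.lintegral_lt_top.ne _)
      hdouble hx
  intro c hc t ht
  have htδ : t ∈ Ioo 0 δ := ⟨ht.1, by linarith [ht.1, ht.2]⟩
  rw [iterConv_eq_toReal_lconvPow hf hnn hfi, iterConv_eq_toReal_lconvPow hf hnn hfi, ← hGG]
  calc ((G ⋆ₗ G) (c * t)).toReal
      ≤ (ENNReal.ofReal (c ^ (2 * γ + 1)) * (G ⋆ₗ G) t).toReal :=
        ENNReal.toReal_mono (ENNReal.mul_ne_top ENNReal.ofReal_ne_top (hfin t htδ).ne)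
          (hdouble c hc t ⟨ht.1, htδ.2.le⟩)
    _ = c ^ (2 * γ + 1) * ((G ⋆ₗ G) t).toReal := by
        rw [ENNReal.toReal_mul, ENNReal.toReal_ofReal (Real.rpow_nonneg hc.1.le _)]

theorem iterConv_two_pow_mul (hf : Measurable f) (hnn : ∀ t, 0 ≤ f t)
    (hsupp : ∀ t ≤ 0, f t = 0) (hfi : Integrable f) {N : ℕ} (hN : N ≠ 0)
    (h : ScaleBound (iterConv f N) δ γ) (k : ℕ) :
    ScaleBound (iterConv f (2 ^ k * N)) (δ / 2 ^ k) (2 ^ k * (γ + 1) - 1) := by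
  induction k with
  | zero => simpa using h
  | succ k ih =>
    have := ih.iterConv_two_mul hf hnn hsupp hfi (by positivity)
    rwa [← mul_assoc, ← pow_succ', div_div, ← pow_succ,
      show 2 * (2 ^ k * (γ + 1) - 1) + 1 = (2 : ℝ) ^ (k + 1) * (γ + 1) - 1 by ring] at this

end ScaleBound

theorem stmt9
    (f : ℝ → ℝ) (hmeas : Measurable f) (hnn : ∀ t, 0 ≤ f t)
    (hsupp : ∀ t ≤ (0 : ℝ), f t = 0) (hint : ∫ t, f t = 1) :
    (∃ N₁ : ℕ, 1 ≤ N₁ ∧ ∃ ε > (0 : ℝ),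
        MonotoneOn (iterConv f N₁) (Ioc 0 ε)) ↔
    (∃ N₂ : ℕ, 1 ≤ N₂ ∧ ∃ ε > (0 : ℝ), ∃ β : ℝ, -1 < β ∧
        ∀ c ∈ Ioo (0 : ℝ) 1, ∀ t ∈ Ioc (0 : ℝ) ε,
          iterConv f N₂ (c * t) ≤ c ^ β * iterConv f N₂ t) := by
  have hfi : Integrable f := Integrable.of_integral_ne_zero (by simp [hint])
  constructor
  · rintro ⟨N, hN, ε, hε, hmono⟩
    exact ⟨N, hN, ε, hε, 0, by norm_num, hmono.scaleBound_zero⟩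
  · rintro ⟨N, hN, ε, hε, β, hβ, h⟩
    obtain ⟨k, hk⟩ := pow_unbounded_of_one_lt (1 / (β + 1)) (one_lt_two (α := ℝ))
    have hγ : 0 ≤ (2 : ℝ) ^ k * (β + 1) - 1 := by
      rw [div_lt_iff₀ (by linarith)] at hk
      linarith
    have hscale : ScaleBound (iterConv f (2 ^ k * N)) (ε / 2 ^ k) (2 ^ k * (β + 1) - 1) :=
      ScaleBound.iterConv_two_pow_mul hmeas hnn hsupp hfi (by omega) h k
    exact ⟨2 ^ k * N, Nat.one_le_iff_ne_zero.2 (by positivity), ε / 2 ^ k, by positivity,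
      hscale.monotoneOn hγ fun t _ => iterConv_nonneg hmeas hnn hfi _ t⟩
end

section
/- Let g be a nonnegative function on ℝ, vanishing on (−∞,0), of class C^1 on (0, ∞) and integrable on (0, ∞). Then for every n ≥ 1, the n-fold self-convolution g^{*n} is of class C^1 on (0, ∞), vanishes on (−∞,0), and for n ≥ 2, every 1 ≤ j ≤ n−1, and every x > 0: (g^{*n})'(x) = ∫_0^{x/2} g^{*j}(t) (g^{*(n−j)})'(x−t) dt + ∫_0^{x/2} g^{*(n−j)}(t) (g^{*j})'(x−t) dt + g^{*j}(x/2) g^{*(n−j)}(x/2). -/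
/-!
For `f, h` vanishing on `(-∞, 0)`, `(f ⋆ h)(x) = ∫₀ˣ f(t) h(x - t) dt`; splitting at `x / 2` and
substituting `t ↦ x - t` in the upper half gives
`(f ⋆ h)(x) = ∫₀^{x/2} f(t) h(x - t) dt + ∫₀^{x/2} h(t) f(x - t) dt`.
In each half the factor that gets differentiated is only evaluated on `[x/2, x)`, away from the
possible singularity at `0`, so differentiation under the integral sign is dominated by `|f|`
times a bound of `h'` on a compact subinterval of `(0, ∞)`, while the moving endpoint `x / 2`
contributes `f(x/2) h(x/2) / 2` from each half. Hence `f ⋆ h` is again `C¹` on `(0, ∞)` with the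
stated derivative, and it stays continuous, integrable and supported in `[0, ∞)`. For nonnegative
factors convolution is associative, so `g^{*n} = g^{*j} ⋆ g^{*(n-j)}`, and induction on `n`
concludes.
-/

open MeasureTheory Filter Set
open scoped Topology

theorem hasDerivAt_intervalIntegral_comp_upper {F : ℝ → ℝ → ℝ} {u : ℝ → ℝ} {u' x : ℝ}
    (hu : HasDerivAt u u' x) (hF : ContinuousAt (fun p : ℝ × ℝ => F p.1 p.2) (u x, x))
    (hint : ∀ᶠ y in 𝓝 x, IntervalIntegrable (F · y) volume (u x) (u y)) :
    HasDerivAt (fun y => ∫ t in u x..u y, F t y) (u' * F (u x) x) x := by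
  set K := F (u x) x
  -- Split `F t y = K + (F t y - K)`: the constant contributes `(u y - u x) * K`, and the rest is
  -- `o(u y - u x)` because `F t y` is close to `K` for `t` between `u x` and `u y`.
  have hmain : HasDerivAt (fun y => (u y - u x) * K) (u' * K) x := (hu.sub_const _).mul_const K
  have hrem : HasDerivAt (fun y => ∫ t in u x..u y, (F t y - K)) 0 x := by
    rw [hasDerivAt_iff_isLittleO]
    simp only [intervalIntegral.integral_same, sub_zero, smul_zero]
    refine Asymptotics.IsLittleO.trans_isBigO ?_ hu.isBigO_sub
    refine Asymptotics.isLittleO_iff.mpr fun ε hε => ?_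
    obtain ⟨δ, hδ, hFδ⟩ := Metric.continuousAt_iff.mp hF ε hε
    filter_upwards [Metric.tendsto_nhds.mp hu.continuousAt δ hδ, Metric.ball_mem_nhds x hδ]
      with y huy hy
    refine intervalIntegral.norm_integral_le_of_norm_le_const fun t ht => ?_
    have ht' : dist t (u x) ≤ dist (u y) (u x) := by
      simpa only [Real.dist_eq] using abs_sub_left_of_mem_uIcc (uIoc_subset_uIcc ht)
    exact (hFδ (x := (t, y)) (by rw [Prod.dist_eq]; exact max_lt (ht'.trans_lt huy) hy)).le
  refine (hmain.add hrem).congr_of_eventuallyEq ?_ |>.congr_deriv (by ring)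
  filter_upwards [hint] with y hy
  show _ = (u y - u x) * K + ∫ t in u x..u y, (F t y - K)
  rw [intervalIntegral.integral_sub hy intervalIntegrable_const, intervalIntegral.integral_const,
    smul_eq_mul]
  ring

section MulCompSub

variable {f h ψ : ℝ → ℝ} {c x : ℝ}

theorem integrableOn_mul_comp_sub (hf : IntegrableOn f (Ioc 0 c)) (hψ : ContinuousOn ψ (Ioi 0))
    (hcx : c < x) : IntegrableOn (fun t => f t * ψ (x - t)) (Ioc 0 c) :=
  hf.mul_continuousOn_of_subset
    (hψ.comp (by fun_prop) fun t ht => show 0 < x - t by linarith [ht.2])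
    measurableSet_Ioc isCompact_Icc Ioc_subset_Icc_self

theorem exists_norm_comp_sub_le (hψ : ContinuousOn ψ (Ioi 0)) (hcx : c < x) :
    ∃ C, ∀ y ∈ Metric.ball x ((x - c) / 2), ∀ t ∈ Ioc 0 c, ‖ψ (y - t)‖ ≤ C := by
  have hK : Icc ((x - c) / 2) (x + (x - c) / 2) ⊆ Ioi 0 := fun s hs => show 0 < s by
    linarith [hs.1]
  obtain ⟨C, hC⟩ := isCompact_Icc.exists_bound_of_continuousOn (hψ.mono hK)
  refine ⟨C, fun y hy t ht => hC _ ?_⟩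
  rw [Metric.mem_ball, Real.dist_eq, abs_lt] at hy
  constructor <;> linarith [ht.1, ht.2]

theorem lt_of_mem_ball_half_sub {y : ℝ} (hy : y ∈ Metric.ball x ((x - c) / 2)) : c < y := by
  rw [Metric.mem_ball, Real.dist_eq, abs_lt] at hy
  linarith [hy.1]

theorem continuousAt_integral_mul_comp_sub (hf : IntegrableOn f (Ioc 0 c))
    (hψ : ContinuousOn ψ (Ioi 0)) (hcx : c < x) :
    ContinuousAt (fun y => ∫ t in Ioc 0 c, f t * ψ (y - t)) x := by
  obtain ⟨C, hC⟩ := exists_norm_comp_sub_le hψ hcx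
  have hball : Metric.ball x ((x - c) / 2) ∈ 𝓝 x := Metric.ball_mem_nhds x (by linarith)
  refine continuousAt_of_dominated (bound := fun t => ‖f t‖ * C) ?_ ?_ (hf.norm.mul_const C) ?_
  · filter_upwards [hball] with y hy
    exact (integrableOn_mul_comp_sub hf hψ (lt_of_mem_ball_half_sub hy)).aestronglyMeasurable
  · filter_upwards [hball] with y hy
    refine ae_restrict_of_forall_mem measurableSet_Ioc fun t ht => ?_
    rw [norm_mul]
    exact mul_le_mul_of_nonneg_left (hC y hy t ht) (norm_nonneg _)
  · refine ae_restrict_of_forall_mem measurableSet_Ioc fun t ht => ?_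
    have hψt : ContinuousAt ψ (x - t) := hψ.continuousAt (Ioi_mem_nhds (by linarith [ht.2]))
    exact continuousAt_const.mul (hψt.comp (f := fun y => y - t) (by fun_prop))

theorem hasDerivAt_integral_mul_comp_sub (hf : IntegrableOn f (Ioc 0 c))
    (hh : ContDiffOn ℝ 1 h (Ioi 0)) (hcx : c < x) :
    HasDerivAt (fun y => ∫ t in Ioc 0 c, f t * h (y - t))
      (∫ t in Ioc 0 c, f t * deriv h (x - t)) x := by
  have hh' : ContinuousOn (deriv h) (Ioi 0) := hh.continuousOn_deriv_of_isOpen isOpen_Ioi le_rfl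
  obtain ⟨C, hC⟩ := exists_norm_comp_sub_le hh' hcx
  have hball : Metric.ball x ((x - c) / 2) ∈ 𝓝 x := Metric.ball_mem_nhds x (by linarith)
  refine (hasDerivAt_integral_of_dominated_loc_of_deriv_le (F := fun y t => f t * h (y - t))
    (F' := fun y t => f t * deriv h (y - t))
    (bound := fun t => ‖f t‖ * C) hball
    ?_ (integrableOn_mul_comp_sub hf hh.continuousOn hcx)
    (integrableOn_mul_comp_sub hf hh' hcx).aestronglyMeasurable ?_ (hf.norm.mul_const C) ?_).2
  · filter_upwards [hball] with y hy
    exact (integrableOn_mul_comp_sub hf hh.continuousOn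
      (lt_of_mem_ball_half_sub hy)).aestronglyMeasurable
  · refine ae_restrict_of_forall_mem measurableSet_Ioc fun t ht y hy => ?_
    rw [norm_mul]
    exact mul_le_mul_of_nonneg_left (hC y hy t ht) (norm_nonneg _)
  · refine ae_restrict_of_forall_mem measurableSet_Ioc fun t ht y hy => ?_
    have hyt : 0 < y - t := by linarith [lt_of_mem_ball_half_sub hy, ht.2]
    have hd : HasDerivAt h (deriv h (y - t)) (y - t) :=
      ((hh.differentiableOn one_ne_zero).differentiableAt (Ioi_mem_nhds hyt)).hasDerivAt
    simpa using (hd.comp_sub_const y t).const_mul (f t)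

end MulCompSub

noncomputable def halfConv (f h : ℝ → ℝ) (x : ℝ) : ℝ := ∫ t in Ioc 0 (x / 2), f t * h (x - t)

section HalfConv

variable {f h ψ : ℝ → ℝ} {x : ℝ}

theorem eventually_intervalIntegrable_mul_comp_sub_half (hf : ContinuousOn f (Ioi 0))
    (hψ : ContinuousOn ψ (Ioi 0)) (hx : 0 < x) :
    ∀ᶠ y in 𝓝 x, IntervalIntegrable (fun t => f t * ψ (y - t)) volume (x / 2) (y / 2) := by
  filter_upwards [Ioi_mem_nhds (by linarith : x / 2 < x)] with y hy
  have hy : x / 2 < y := hy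
  have hpos : ∀ t ∈ uIcc (x / 2) (y / 2), 0 < t ∧ 0 < y - t := fun t ht => by
    rcases mem_uIcc.mp ht with h | h <;> constructor <;> linarith [h.1, h.2]
  exact ((hf.mono fun t ht => (hpos t ht).1).mul
    (hψ.comp (by fun_prop) fun t ht => (hpos t ht).2)).intervalIntegrable

theorem hasDerivAt_integral_half_mul_comp_sub (hf : ContinuousOn f (Ioi 0))
    (hψ : ContinuousOn ψ (Ioi 0)) (hx : 0 < x) :
    HasDerivAt (fun y => ∫ t in x / 2..y / 2, f t * ψ (y - t)) (f (x / 2) * ψ (x / 2) / 2) x := by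
  have hfx : ContinuousAt f (x / 2) := hf.continuousAt (Ioi_mem_nhds (by linarith))
  have hψx : ContinuousAt ψ (x - x / 2) := hψ.continuousAt (Ioi_mem_nhds (by linarith))
  have hF : ContinuousAt (fun p : ℝ × ℝ => f p.1 * ψ (p.2 - p.1)) (x / 2, x) :=
    (hfx.comp (x := (x / 2, x)) continuousAt_fst).mul
      (hψx.comp (f := fun p : ℝ × ℝ => p.2 - p.1) (x := (x / 2, x)) (by fun_prop))
  have := hasDerivAt_intervalIntegral_comp_upper (F := fun t y => f t * ψ (y - t))
    ((hasDerivAt_id' x).div_const 2) hF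
    (eventually_intervalIntegrable_mul_comp_sub_half hf hψ hx)
  rw [show x - x / 2 = x / 2 by ring] at this
  exact this.congr_deriv (by ring)

theorem halfConv_eventuallyEq (hf : IntegrableOn f (Ioc 0 (x / 2))) (hfc : ContinuousOn f (Ioi 0))
    (hψ : ContinuousOn ψ (Ioi 0)) (hx : 0 < x) :
    halfConv f ψ =ᶠ[𝓝 x] fun y =>
      (∫ t in Ioc 0 (x / 2), f t * ψ (y - t)) + ∫ t in x / 2..y / 2, f t * ψ (y - t) := by
  filter_upwards [Ioi_mem_nhds (by linarith : x / 2 < x),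
    eventually_intervalIntegrable_mul_comp_sub_half hfc hψ hx] with y hy hint
  have hy : x / 2 < y := hy
  have hint₀ : IntervalIntegrable (fun t => f t * ψ (y - t)) volume 0 (x / 2) :=
    (intervalIntegrable_iff_integrableOn_Ioc_of_le (by linarith)).mpr
      (integrableOn_mul_comp_sub hf hψ hy)
  rw [halfConv, ← intervalIntegral.integral_of_le (by linarith),
    ← intervalIntegral.integral_add_adjacent_intervals hint₀ hint,
    intervalIntegral.integral_of_le (by linarith)]

theorem hasDerivAt_halfConv (hf : IntegrableOn f (Ioc 0 (x / 2))) (hfc : ContinuousOn f (Ioi 0))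
    (hh : ContDiffOn ℝ 1 h (Ioi 0)) (hx : 0 < x) :
    HasDerivAt (halfConv f h) (halfConv f (deriv h) x + f (x / 2) * h (x / 2) / 2) x :=
  ((hasDerivAt_integral_mul_comp_sub hf hh (by linarith)).add
    (hasDerivAt_integral_half_mul_comp_sub hfc hh.continuousOn hx)).congr_of_eventuallyEq
    (halfConv_eventuallyEq hf hfc hh.continuousOn hx)

theorem continuousAt_halfConv (hf : IntegrableOn f (Ioc 0 (x / 2)))
    (hfc : ContinuousOn f (Ioi 0)) (hψ : ContinuousOn ψ (Ioi 0)) (hx : 0 < x) :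
    ContinuousAt (halfConv f ψ) x :=
  ((continuousAt_integral_mul_comp_sub hf hψ (by linarith)).add
    (hasDerivAt_integral_half_mul_comp_sub hfc hψ hx).continuousAt).congr
    (halfConv_eventuallyEq hf hfc hψ hx).symm

end HalfConv

section Causal

variable {f h : ℝ → ℝ} {x : ℝ}

theorem mul_comp_sub_eq_indicator_Icc (hf : ∀ t < 0, f t = 0) (hh : ∀ t < 0, h t = 0) (x : ℝ) :
    (fun t => f t * h (x - t)) = (Icc 0 x).indicator fun t => f t * h (x - t) := by
  refine (indicator_eq_self.mpr fun t ht => ?_).symm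
  by_contra hnot
  rcases not_and_or.mp hnot with ht0 | htx
  · exact ht (by simp [hf t (not_le.mp ht0)])
  · exact ht (by simp [hh (x - t) (by linarith [not_le.mp htx])])

theorem conv_eq_setIntegral_Icc (hf : ∀ t < 0, f t = 0) (hh : ∀ t < 0, h t = 0) (x : ℝ) :
    conv f h x = ∫ t in Icc 0 x, f t * h (x - t) := by
  rw [← integral_indicator measurableSet_Icc, ← mul_comp_sub_eq_indicator_Icc hf hh]
  rfl

theorem conv_eq_zero_of_neg (hf : ∀ t < 0, f t = 0) (hh : ∀ t < 0, h t = 0) (hx : x < 0) :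
    conv f h x = 0 := by
  rw [conv_eq_setIntegral_Icc hf hh, Icc_eq_empty_of_lt hx, Measure.restrict_empty,
    integral_zero_measure]

theorem conv_eq_intervalIntegral (hf : ∀ t < 0, f t = 0) (hh : ∀ t < 0, h t = 0) (hx : 0 ≤ x) :
    conv f h x = ∫ t in 0..x, f t * h (x - t) := by
  rw [conv_eq_setIntegral_Icc hf hh, integral_Icc_eq_integral_Ioc,
    intervalIntegral.integral_of_le hx]

theorem intervalIntegral_mul_comp_sub_upper_half (f h : ℝ → ℝ) (x : ℝ) :
    ∫ t in x / 2..x, f t * h (x - t) = ∫ t in 0..x / 2, h t * f (x - t) := by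
  have := intervalIntegral.integral_comp_sub_left (fun s => h s * f (x - s)) (a := x / 2) (b := x) x
  simp only [sub_sub_cancel, sub_self] at this
  rw [show x - x / 2 = x / 2 by ring] at this
  simpa only [mul_comm] using this

end Causal

structure CausalIntegrable (f : ℝ → ℝ) : Prop where
  eq_zero_of_neg : ∀ t < 0, f t = 0
  continuousOn : ContinuousOn f (Ioi 0)
  integrable : Integrable f

section CausalIntegrable

variable {f h : ℝ → ℝ} {x : ℝ}

theorem CausalIntegrable.of_integrableOn_Ioi (hf : ∀ t < 0, f t = 0)
    (hfc : ContinuousOn f (Ioi 0)) (hfi : IntegrableOn f (Ioi 0)) : CausalIntegrable f :=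
  ⟨hf, hfc, ((integrableOn_Ici_iff_integrableOn_Ioi).mpr hfi).integrable_of_forall_notMem_eq_zero
    fun t ht => hf t (not_le.mp ht)⟩

theorem CausalIntegrable.intervalIntegrable_mul_comp_sub_lower_half (hf : CausalIntegrable f)
    (hh : CausalIntegrable h) (hx : 0 < x) :
    IntervalIntegrable (fun t => f t * h (x - t)) volume 0 (x / 2) :=
  (intervalIntegrable_iff_integrableOn_Ioc_of_le (by linarith)).mpr
    (integrableOn_mul_comp_sub hf.integrable.integrableOn hh.continuousOn (by linarith))

theorem CausalIntegrable.intervalIntegrable_mul_comp_sub_upper_half (hf : CausalIntegrable f)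
    (hh : CausalIntegrable h) (hx : 0 < x) :
    IntervalIntegrable (fun t => f t * h (x - t)) volume (x / 2) x := by
  have := (hh.intervalIntegrable_mul_comp_sub_lower_half hf hx).comp_sub_left x
  simp only [sub_sub_cancel, sub_zero, show x - x / 2 = x / 2 by ring] at this
  simpa only [mul_comm] using this.symm

theorem CausalIntegrable.intervalIntegrable_mul_comp_sub (hf : CausalIntegrable f)
    (hh : CausalIntegrable h) (hx : 0 ≤ x) :
    IntervalIntegrable (fun t => f t * h (x - t)) volume 0 x := by
  rcases hx.eq_or_lt with rfl | hx
  · exact .refl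
  exact (hf.intervalIntegrable_mul_comp_sub_lower_half hh hx).trans
    (hf.intervalIntegrable_mul_comp_sub_upper_half hh hx)

theorem CausalIntegrable.conv_eq_halfConv_add (hf : CausalIntegrable f) (hh : CausalIntegrable h)
    (hx : 0 < x) : conv f h x = halfConv f h x + halfConv h f x := by
  rw [conv_eq_intervalIntegral hf.eq_zero_of_neg hh.eq_zero_of_neg hx.le,
    ← intervalIntegral.integral_add_adjacent_intervals
      (hf.intervalIntegrable_mul_comp_sub_lower_half hh hx)
      (hf.intervalIntegrable_mul_comp_sub_upper_half hh hx),
    intervalIntegral_mul_comp_sub_upper_half,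
    intervalIntegral.integral_of_le (by linarith), intervalIntegral.integral_of_le (by linarith)]
  rfl

theorem CausalIntegrable.convolutionExistsAt (hf : CausalIntegrable f) (hh : CausalIntegrable h)
    (x : ℝ) : ConvolutionExistsAt f h x (ContinuousLinearMap.mul ℝ ℝ) volume := by
  show Integrable (fun t => f t * h (x - t))
  rw [mul_comp_sub_eq_indicator_Icc hf.eq_zero_of_neg hh.eq_zero_of_neg,
    integrable_indicator_iff measurableSet_Icc]
  rcases lt_or_ge x 0 with hx | hx
  · simp [Icc_eq_empty_of_lt hx]
  · exact (integrableOn_Icc_iff_integrableOn_Ioc).mpr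
      ((intervalIntegrable_iff_integrableOn_Ioc_of_le hx).mp
        (hf.intervalIntegrable_mul_comp_sub hh hx))

theorem CausalIntegrable.conv_eventuallyEq (hf : CausalIntegrable f) (hh : CausalIntegrable h)
    (hx : 0 < x) : conv f h =ᶠ[𝓝 x] fun y => halfConv f h y + halfConv h f y := by
  filter_upwards [Ioi_mem_nhds hx] with y hy
  exact hf.conv_eq_halfConv_add hh hy

theorem CausalIntegrable.hasDerivAt_conv (hf : CausalIntegrable f) (hh : CausalIntegrable h)
    (hf₁ : ContDiffOn ℝ 1 f (Ioi 0)) (hh₁ : ContDiffOn ℝ 1 h (Ioi 0)) (hx : 0 < x) :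
    HasDerivAt (conv f h)
      (halfConv f (deriv h) x + halfConv h (deriv f) x + f (x / 2) * h (x / 2)) x :=
  ((hasDerivAt_halfConv hf.integrable.integrableOn hf.continuousOn hh₁ hx).add
    (hasDerivAt_halfConv hh.integrable.integrableOn hh.continuousOn hf₁ hx)).congr_of_eventuallyEq
    (hf.conv_eventuallyEq hh hx) |>.congr_deriv (by ring)

theorem CausalIntegrable.contDiffOn_conv (hf : CausalIntegrable f) (hh : CausalIntegrable h)
    (hf₁ : ContDiffOn ℝ 1 f (Ioi 0)) (hh₁ : ContDiffOn ℝ 1 h (Ioi 0)) :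
    ContDiffOn ℝ 1 (conv f h) (Ioi 0) := by
  refine (contDiffOn_succ_iff_deriv_of_isOpen (n := 0) isOpen_Ioi).mpr
    ⟨fun y hy => (hf.hasDerivAt_conv hh hf₁ hh₁ hy).differentiableAt.differentiableWithinAt,
      by simp, contDiffOn_zero.mpr fun y hy => ?_⟩
  have hy : 0 < y := hy
  have hf' := hf₁.continuousOn_deriv_of_isOpen isOpen_Ioi le_rfl
  have hh' := hh₁.continuousOn_deriv_of_isOpen isOpen_Ioi le_rfl
  have hhalf : ContinuousAt (fun z : ℝ => z / 2) y := by fun_prop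
  have hprod : ContinuousAt (fun z => f (z / 2) * h (z / 2)) y :=
    ((hf.continuousOn.continuousAt (Ioi_mem_nhds (by linarith))).comp hhalf).mul
      ((hh.continuousOn.continuousAt (Ioi_mem_nhds (by linarith))).comp hhalf)
  refine ContinuousAt.continuousWithinAt <| ContinuousAt.congr ?_
    (eventually_of_mem (Ioi_mem_nhds hy) fun z hz =>
      (hf.hasDerivAt_conv hh hf₁ hh₁ hz).deriv.symm)
  exact ((continuousAt_halfConv hf.integrable.integrableOn hf.continuousOn hh' hy).add
    (continuousAt_halfConv hh.integrable.integrableOn hh.continuousOn hf' hy)).add hprod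

theorem CausalIntegrable.conv (hf : CausalIntegrable f) (hh : CausalIntegrable h) :
    CausalIntegrable (conv f h) where
  eq_zero_of_neg _ ht := conv_eq_zero_of_neg hf.eq_zero_of_neg hh.eq_zero_of_neg ht
  continuousOn y hy := by
    have hy : 0 < y := hy
    refine ContinuousAt.continuousWithinAt ?_
    exact ((continuousAt_halfConv hf.integrable.integrableOn hf.continuousOn hh.continuousOn hy).add
      (continuousAt_halfConv hh.integrable.integrableOn hh.continuousOn hf.continuousOn hy)).congr
      (hf.conv_eventuallyEq hh hy).symm
  integrable := hf.integrable.integrable_convolution (ContinuousLinearMap.mul ℝ ℝ) hh.integrable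

end CausalIntegrable

theorem conv_assoc_of_nonneg {f p q : ℝ → ℝ} (hf : CausalIntegrable f) (hp : CausalIntegrable p)
    (hq : CausalIntegrable q) (hf₀ : ∀ t, 0 ≤ f t) (hp₀ : ∀ t, 0 ≤ p t) (hq₀ : ∀ t, 0 ≤ q t) :
    conv (conv f p) q = conv f (conv p q) := by
  funext x
  have hnorm : ∀ {k : ℝ → ℝ}, (∀ t, 0 ≤ k t) → (fun t => ‖k t‖) = k :=
    fun hk => funext fun t => Real.norm_of_nonneg (hk t)
  refine convolution_assoc (ContinuousLinearMap.mul ℝ ℝ) (ContinuousLinearMap.mul ℝ ℝ)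
    (ContinuousLinearMap.mul ℝ ℝ) (ContinuousLinearMap.mul ℝ ℝ) (fun a b c => mul_assoc a b c)
    hf.integrable.aestronglyMeasurable hp.integrable.aestronglyMeasurable
    hq.integrable.aestronglyMeasurable (.of_forall (hf.convolutionExistsAt hp)) ?_ ?_
  · rw [hnorm hp₀, hnorm hq₀]
    exact .of_forall (hp.convolutionExistsAt hq)
  · rw [hnorm hf₀, hnorm hp₀, hnorm hq₀]
    exact hf.convolutionExistsAt (hp.conv hq) x

section IterConv

variable {g : ℝ → ℝ}

theorem iterConv_succ {n : ℕ} (hn : 1 ≤ n) :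
    iterConv g (n + 1) = conv g (iterConv g n) := by
  obtain ⟨m, rfl⟩ := Nat.exists_eq_add_of_le' hn
  rfl

theorem iterConv_nonneg_s10 (hg : ∀ t, 0 ≤ g t) : ∀ n t, 0 ≤ iterConv g n t
  | 0, _ => le_rfl
  | 1, t => hg t
  | n + 2, _ => integral_nonneg fun s => mul_nonneg (hg s) (iterConv_nonneg_s10 hg (n + 1) _)

theorem causalIntegrable_iterConv (hg : CausalIntegrable g) {n : ℕ} (hn : 1 ≤ n) :
    CausalIntegrable (iterConv g n) := by
  induction n, hn using Nat.le_induction with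
  | base => exact hg
  | succ n hn ih => rw [iterConv_succ hn]; exact hg.conv ih

theorem contDiffOn_iterConv (hg : CausalIntegrable g)
    (hg₁ : ContDiffOn ℝ 1 g (Ioi 0)) {n : ℕ} (hn : 1 ≤ n) :
    ContDiffOn ℝ 1 (iterConv g n) (Ioi 0) := by
  induction n, hn using Nat.le_induction with
  | base => exact hg₁
  | succ n hn ih =>
    rw [iterConv_succ hn]
    exact hg.contDiffOn_conv (causalIntegrable_iterConv hg hn) hg₁ ih

theorem iterConv_add (hg : CausalIntegrable g) (hg₀ : ∀ t, 0 ≤ g t) {a b : ℕ}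
    (ha : 1 ≤ a) (hb : 1 ≤ b) :
    iterConv g (a + b) = conv (iterConv g a) (iterConv g b) := by
  induction a, ha using Nat.le_induction with
  | base => rw [add_comm, iterConv_succ hb]; rfl
  | succ a ha ih =>
    rw [add_right_comm, iterConv_succ (by omega), ih, iterConv_succ ha,
      conv_assoc_of_nonneg hg (causalIntegrable_iterConv hg ha) (causalIntegrable_iterConv hg hb)
        hg₀ (iterConv_nonneg_s10 hg₀ a) (iterConv_nonneg_s10 hg₀ b)]

end IterConv

theorem stmt10
    (g : ℝ → ℝ) (hnn : ∀ t, 0 ≤ g t) (hsupp : ∀ t < (0 : ℝ), g t = 0)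
    (hC1 : ContDiffOn ℝ 1 g (Ioi 0)) (hint : IntegrableOn g (Ioi 0)) :
    (∀ n : ℕ, 1 ≤ n →
      ContDiffOn ℝ 1 (iterConv g n) (Ioi 0) ∧ ∀ t < (0 : ℝ), iterConv g n t = 0) ∧
    ∀ n : ℕ, 2 ≤ n → ∀ j : ℕ, 1 ≤ j → j ≤ n - 1 → ∀ x : ℝ, 0 < x →
      deriv (iterConv g n) x =
        (∫ t in Ioc (0 : ℝ) (x / 2),
            iterConv g j t * deriv (iterConv g (n - j)) (x - t))
        + (∫ t in Ioc (0 : ℝ) (x / 2),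
            iterConv g (n - j) t * deriv (iterConv g j) (x - t))
        + iterConv g j (x / 2) * iterConv g (n - j) (x / 2) := by
  have hg := CausalIntegrable.of_integrableOn_Ioi hsupp hC1.continuousOn hint
  refine ⟨fun n hn => ⟨contDiffOn_iterConv hg hC1 hn,
    (causalIntegrable_iterConv hg hn).eq_zero_of_neg⟩, fun n hn j hj hjn x hx => ?_⟩
  have hnj : 1 ≤ n - j := by omega
  have hsplit : iterConv g n = conv (iterConv g j) (iterConv g (n - j)) := by
    rw [← iterConv_add hg hnn hj hnj, Nat.add_sub_cancel' (by omega)]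
  have hderiv := (causalIntegrable_iterConv hg hj).hasDerivAt_conv
    (causalIntegrable_iterConv hg hnj) (contDiffOn_iterConv hg hC1 hj)
    (contDiffOn_iterConv hg hC1 hnj) hx
  rw [hsplit, hderiv.deriv]
  rfl
end

section
/- Let (X_n) be i.i.d. nonnegative random variables, x > 0, and suppose there exists K ∈ ℕ* such that the density of S_K is non-decreasing on [0, x]. Then for all n ≥ K and all y ∈ [0, x]: P[S_n ≤ x − y]/P[S_n ≤ x] ≤ ((x − y)/x)^{n/K − 1}. -/
open MeasureTheory ProbabilityTheory Filter Set
open scoped ENNReal Topology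

/-!
Write `F_n` for the distribution function of `S_n`. We show
`F_n (l * s) ≤ l ^ ⌊n / K⌋ * F_n s` for `l ∈ [0, 1]` and `s ∈ [0, x]`.
For `n = K` this is the convexity of `F_K` on `[0, x]` together with `F_K 0 = 0`. The exponent is
additive under convolution of laws carried by `[0, ∞)`: substituting `u ↦ u / l` in one factor of
`(μ ∗ ν) (Iic (l * s))` and then in the other extracts both powers of `l`. Since `S_n` is `S_K` plus
an independent copy of `S_{n - K}`, induction gives the exponent `⌊n / K⌋ ≥ n / K - 1`.
-/

def IicPowScaling (μ : Measure ℝ) (x : ℝ) (m : ℕ) : Prop :=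
  ∀ l ∈ Icc (0 : ℝ) 1, ∀ s ∈ Icc 0 x, μ (Iic (l * s)) ≤ ENNReal.ofReal l ^ m * μ (Iic s)

lemma iicPowScaling_zero (μ : Measure ℝ) (x : ℝ) : IicPowScaling μ x 0 := fun l hl s hs => by
  simpa using measure_mono (Iic_subset_Iic.2 (mul_le_of_le_one_left hs.1 hl.2))

lemma measure_Iic_eq_zero_of_neg {μ : Measure ℝ} (hμ : μ (Iio 0) = 0) {t : ℝ} (ht : t < 0) :
    μ (Iic t) = 0 :=
  measure_mono_null (Iic_subset_Iio.2 ht) hμ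

lemma setLIntegral_Ioc_zero_mul_le {g : ℝ → ℝ≥0∞} {l s : ℝ} (hg : MonotoneOn g (Icc 0 s))
    (hl : l ∈ Icc (0 : ℝ) 1) (hs : 0 ≤ s) :
    ∫⁻ u in Ioc 0 (l * s), g u ≤ ENNReal.ofReal l * ∫⁻ u in Ioc 0 s, g u := by
  set a := l * s
  have ha0 : 0 ≤ a := mul_nonneg hl.1 hs
  have has : a ≤ s := mul_le_of_le_one_left hs hl.2
  set A := ∫⁻ u in Ioc 0 a, g u
  set B := ∫⁻ u in Ioc a s, g u
  have hA : A ≤ g a * ENNReal.ofReal a := calc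
    A ≤ ∫⁻ _ in Ioc 0 a, g a := setLIntegral_mono' measurableSet_Ioc fun u hu =>
        hg ⟨hu.1.le, hu.2.trans has⟩ ⟨ha0, has⟩ hu.2
    _ = g a * ENNReal.ofReal a := by rw [setLIntegral_const, Real.volume_Ioc, sub_zero]
  have hB : g a * ENNReal.ofReal (s - a) ≤ B := calc
    g a * ENNReal.ofReal (s - a) = ∫⁻ _ in Ioc a s, g a := by
        rw [setLIntegral_const, Real.volume_Ioc]
    _ ≤ B := setLIntegral_mono' measurableSet_Ioc fun u hu =>
        hg ⟨ha0, has⟩ ⟨ha0.trans hu.1.le, hu.2⟩ hu.1.le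
  have hAB : ENNReal.ofReal (1 - l) * A ≤ ENNReal.ofReal l * B := calc
    ENNReal.ofReal (1 - l) * A ≤ ENNReal.ofReal (1 - l) * (g a * ENNReal.ofReal a) := by gcongr
    _ = g a * ENNReal.ofReal ((1 - l) * a) := by
        rw [ENNReal.ofReal_mul (sub_nonneg.2 hl.2)]; ring
    _ = ENNReal.ofReal l * (g a * ENNReal.ofReal (s - a)) := by
        rw [show (1 - l) * a = l * (s - a) by ring, ENNReal.ofReal_mul hl.1]; ring
    _ ≤ ENNReal.ofReal l * B := by gcongr
  calc A = ENNReal.ofReal l * A + ENNReal.ofReal (1 - l) * A := by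
        rw [← add_mul, ← ENNReal.ofReal_add hl.1 (sub_nonneg.2 hl.2)]; simp
    _ ≤ ENNReal.ofReal l * (A + B) := by rw [mul_add]; gcongr
    _ = ENNReal.ofReal l * ∫⁻ u in Ioc 0 s, g u := by
        rw [← lintegral_union measurableSet_Ioc (Ioc_disjoint_Ioc_of_le le_rfl),
          Ioc_union_Ioc_eq_Ioc ha0 has]

lemma iicPowScaling_one_of_eq_withDensity {g : ℝ → ℝ≥0∞} {x : ℝ} (hg : MonotoneOn g (Icc 0 x))
    {μ : Measure ℝ} (hμ : μ = volume.withDensity g) (hμ0 : μ (Iio 0) = 0) :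
    IicPowScaling μ x 1 := by
  have hIic0 : μ (Iic 0) = 0 := by
    have hac : μ ≪ volume := hμ ▸ withDensity_absolutelyContinuous _ _
    rwa [← measure_congr (hac.ae_eq Iio_ae_eq_Iic)]
  have hIic : ∀ t, 0 ≤ t → μ (Iic t) = ∫⁻ u in Ioc 0 t, g u := fun t ht => by
    rw [← Iic_union_Ioc_eq_Iic ht, measure_union (Iic_disjoint_Ioc le_rfl) measurableSet_Ioc,
      hIic0, zero_add, hμ, withDensity_apply _ measurableSet_Ioc]
  intro l hl s hs
  rw [hIic _ (mul_nonneg hl.1 hs.1), hIic _ hs.1, pow_one]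
  exact setLIntegral_Ioc_zero_mul_le (hg.mono (Icc_subset_Icc_right hs.2)) hl hs.1

lemma Measure.conv_Iic (μ ν : Measure ℝ) [SFinite ν] (t : ℝ) :
    (μ ∗ ν) (Iic t) = ∫⁻ u, ν (Iic (t - u)) ∂μ := by
  rw [Measure.conv, Measure.map_apply measurable_add measurableSet_Iic,
    Measure.prod_apply (measurable_add measurableSet_Iic)]
  congr with u
  congr with w
  simp [le_sub_iff_add_le']

lemma lintegral_measure_Iic_sub_div (μ ν : Measure ℝ) [SFinite μ] [SFinite ν] {l : ℝ}
    (hl : 0 < l) (s : ℝ) :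
    ∫⁻ u, ν (Iic (s - u / l)) ∂μ = ∫⁻ w, μ (Iic (l * (s - w))) ∂ν := by
  have hset : MeasurableSet {p : ℝ × ℝ | p.2 ≤ s - p.1 / l} :=
    measurableSet_le (by fun_prop) (by fun_prop)
  calc ∫⁻ u, ν (Iic (s - u / l)) ∂μ = μ.prod ν {p | p.2 ≤ s - p.1 / l} :=
        (Measure.prod_apply hset).symm
    _ = ∫⁻ w, μ (Iic (l * (s - w))) ∂ν := by
        rw [Measure.prod_apply_symm hset]
        congr with w
        congr with u
        simp only [mem_preimage, mem_ofPred_eq, mem_Iic]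
        rw [le_sub_comm, div_le_iff₀ hl, mul_comm]

namespace IicPowScaling

variable {μ ν : Measure ℝ} {x : ℝ} {a b : ℕ}

lemma le_of_pos (h : IicPowScaling μ x a) (hμ0 : μ (Iio 0) = 0) {l : ℝ} (hl0 : 0 < l)
    (hl1 : l ≤ 1) {t : ℝ} (ht : t ≤ x) :
    μ (Iic (l * t)) ≤ ENNReal.ofReal l ^ a * μ (Iic t) := by
  rcases lt_or_ge t 0 with ht0 | ht0
  · rw [measure_Iic_eq_zero_of_neg hμ0 (mul_neg_of_pos_of_neg hl0 ht0)]
    exact zero_le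
  · exact h l ⟨hl0.le, hl1⟩ t ⟨ht0, ht⟩

lemma conv [SFinite μ] [SFinite ν] (hμ : IicPowScaling μ x a) (hν : IicPowScaling ν x b)
    (hμ0 : μ (Iio 0) = 0) (hν0 : ν (Iio 0) = 0) (ha : a ≠ 0) :
    IicPowScaling (μ ∗ ν) x (a + b) := by
  intro l hl s hs
  have hμ_nonneg : ∀ᵐ u ∂μ, 0 ≤ u := by
    filter_upwards [measure_eq_zero_iff_ae_notMem.1 hμ0] with u hu using not_lt.1 hu
  have hν_nonneg : ∀ᵐ w ∂ν, 0 ≤ w := by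
    filter_upwards [measure_eq_zero_iff_ae_notMem.1 hν0] with w hw using not_lt.1 hw
  rcases hl.1.eq_or_lt with rfl | hl0
  · have hμIic0 : μ (Iic 0) = 0 := by
      simpa [ha] using hμ 0 ⟨le_rfl, zero_le_one⟩ 0 ⟨le_rfl, hs.1.trans hs.2⟩
    have hμ_pos : ∀ᵐ u ∂μ, 0 < u := by
      filter_upwards [measure_eq_zero_iff_ae_notMem.1 hμIic0] with u hu using not_le.1 hu
    suffices (μ ∗ ν) (Iic 0) = 0 by rw [zero_mul, this]; exact zero_le
    rw [Measure.conv_Iic, ← lintegral_zero]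
    refine lintegral_congr_ae ?_
    filter_upwards [hμ_pos] with u hu
    exact measure_Iic_eq_zero_of_neg hν0 (by linarith)
  calc (μ ∗ ν) (Iic (l * s))
      ≤ ∫⁻ u, ENNReal.ofReal l ^ b * ν (Iic (s - u / l)) ∂μ := by
        rw [Measure.conv_Iic]
        refine lintegral_mono_ae ?_
        filter_upwards [hμ_nonneg] with u hu
        rw [show l * s - u = l * (s - u / l) by field_simp]
        exact hν.le_of_pos hν0 hl0 hl.2 (by linarith [hs.2, div_nonneg hu hl0.le])
    _ = ENNReal.ofReal l ^ b * ∫⁻ w, μ (Iic (l * (s - w))) ∂ν := by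
        rw [lintegral_const_mul' _ _ (by finiteness), lintegral_measure_Iic_sub_div μ ν hl0]
    _ ≤ ENNReal.ofReal l ^ b * ∫⁻ w, ENNReal.ofReal l ^ a * μ (Iic (s - w)) ∂ν := by
        gcongr ENNReal.ofReal l ^ b * ?_
        refine lintegral_mono_ae ?_
        filter_upwards [hν_nonneg] with w hw
        exact hμ.le_of_pos hμ0 hl0 hl.2 (by linarith [hs.2])
    _ = ENNReal.ofReal l ^ (a + b) * (μ ∗ ν) (Iic s) := by
        rw [lintegral_const_mul' _ _ (by finiteness), Measure.conv_comm, Measure.conv_Iic,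
          pow_add]
        ring

end IicPowScaling

lemma pow_div_le_rpow_div_sub_one {l : ℝ} (hl : l ∈ Icc (0 : ℝ) 1) {n K : ℕ} (hK : K ≠ 0)
    (hn : K ≤ n) : l ^ (n / K) ≤ l ^ ((n : ℝ) / K - 1) := by
  rcases hl.1.eq_or_lt with rfl | hl0
  · rw [zero_pow (Nat.div_pos hn (Nat.pos_of_ne_zero hK)).ne']
    exact Real.rpow_nonneg le_rfl _
  · rw [← Real.rpow_natCast, ← Nat.floor_div_eq_div (K := ℝ)]
    exact Real.rpow_le_rpow_of_exponent_ge hl0 hl.2 (Nat.sub_one_lt_floor _).le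

section IID

variable {Ω : Type*} [MeasurableSpace Ω] {P : Measure Ω} {X : ℕ → Ω → ℝ}

lemma map_Iio_zero_eq_zero_of_nonneg {f : Ω → ℝ} (hf : Measurable f) (hf0 : ∀ ω, 0 ≤ f ω) :
    P.map f (Iio 0) = 0 := by
  rw [Measure.map_apply hf measurableSet_Iio]
  convert measure_empty (μ := P)
  exact eq_empty_of_forall_notMem fun ω hω => (hf0 ω).not_gt hω

lemma map_sum_range_succ_eq_conv [IsFiniteMeasure P] (hmeas : ∀ i, Measurable (X i))
    (hindep : iIndepFun X P) (hident : ∀ i, IdentDistrib (X i) (X 0) P P) (n : ℕ) :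
    P.map (fun ω => ∑ i ∈ Finset.range (n + 1), X i ω)
      = P.map (fun ω => ∑ i ∈ Finset.range n, X i ω) ∗ P.map (X 0) := by
  have hind : IndepFun (fun ω => ∑ i ∈ Finset.range n, X i ω) (X n) P := by
    simpa only [Finset.sum_fn] using hindep.indepFun_sum_range_succ hmeas n
  rw [← (hident n).map_eq,
    ← hind.map_add_eq_map_conv_map (Finset.measurable_sum _ fun i _ => hmeas i) (hmeas n)]
  congr with ω
  simp [Finset.sum_range_succ]

lemma map_sum_range_add_eq_conv [IsProbabilityMeasure P] (hmeas : ∀ i, Measurable (X i))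
    (hindep : iIndepFun X P) (hident : ∀ i, IdentDistrib (X i) (X 0) P P) (m n : ℕ) :
    P.map (fun ω => ∑ i ∈ Finset.range (m + n), X i ω)
      = P.map (fun ω => ∑ i ∈ Finset.range m, X i ω)
        ∗ P.map (fun ω => ∑ i ∈ Finset.range n, X i ω) := by
  induction n with
  | zero => simp [Measure.map_const, Measure.conv_dirac_zero]
  | succ n ih =>
    rw [← add_assoc, map_sum_range_succ_eq_conv hmeas hindep hident, ih, Measure.conv_assoc,
      ← map_sum_range_succ_eq_conv hmeas hindep hident]

lemma iicPowScaling_map_sum_range [IsProbabilityMeasure P] (hmeas : ∀ i, Measurable (X i))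
    (hindep : iIndepFun X P) (hident : ∀ i, IdentDistrib (X i) (X 0) P P)
    (hnonneg : ∀ i ω, 0 ≤ X i ω) {x : ℝ} {K : ℕ} (hK : K ≠ 0)
    (hscale : IicPowScaling (P.map fun ω => ∑ i ∈ Finset.range K, X i ω) x 1) (n : ℕ) :
    IicPowScaling (P.map fun ω => ∑ i ∈ Finset.range n, X i ω) x (n / K) := by
  have hlaw_nonneg (m : ℕ) : P.map (fun ω => ∑ i ∈ Finset.range m, X i ω) (Iio 0) = 0 :=
    map_Iio_zero_eq_zero_of_nonneg (Finset.measurable_sum _ fun i _ => hmeas i)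
      fun ω => Finset.sum_nonneg fun i _ => hnonneg i ω
  induction n using Nat.strong_induction_on with
  | _ n ih =>
    rcases lt_or_ge n K with hn | hn
    · rw [Nat.div_eq_of_lt hn]
      exact iicPowScaling_zero _ _
    · have hsplit := map_sum_range_add_eq_conv hmeas hindep hident K (n - K)
      rw [Nat.add_sub_cancel' hn] at hsplit
      rw [hsplit, Nat.div_eq_sub_div (Nat.pos_of_ne_zero hK) hn, add_comm]
      exact hscale.conv (ih (n - K) (by omega)) (hlaw_nonneg K) (hlaw_nonneg (n - K)) one_ne_zero

end IID

theorem stmt14_general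
    {Ω : Type*} [MeasurableSpace Ω] (P : Measure Ω) [IsProbabilityMeasure P]
    (X : ℕ → Ω → ℝ)
    (hmeas : ∀ i, Measurable (X i))
    (hindep : iIndepFun X P)
    (hident : ∀ i, IdentDistrib (X i) (X 0) P P)
    (hnonneg : ∀ i ω, 0 ≤ X i ω)
    (x : ℝ) (hx : 0 < x)
    (K : ℕ) (hK : 1 ≤ K)
    (fK : ℝ → ℝ)
    (hdens : Measure.map (fun ω => ∑ i ∈ Finset.range K, X i ω) P =
      (volume : Measure ℝ).withDensity (fun t => ENNReal.ofReal (fK t)))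
    (hmono : MonotoneOn fK (Icc 0 x)) :
    ∀ n : ℕ, K ≤ n → ∀ y ∈ Icc (0 : ℝ) x,
      (P {ω | ∑ i ∈ Finset.range n, X i ω ≤ x - y}).toReal ≤
        ((x - y) / x) ^ ((n : ℝ) / (K : ℝ) - 1)
          * (P {ω | ∑ i ∈ Finset.range n, X i ω ≤ x}).toReal := by
  intro n hn y hy
  have hK0 : K ≠ 0 := by omega
  have hSmeas (m : ℕ) : Measurable fun ω => ∑ i ∈ Finset.range m, X i ω :=
    Finset.measurable_sum _ fun i _ => hmeas i
  have hscaleK : IicPowScaling (P.map fun ω => ∑ i ∈ Finset.range K, X i ω) x 1 :=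
    iicPowScaling_one_of_eq_withDensity (ENNReal.ofReal_mono.comp_monotoneOn hmono) hdens
      (map_Iio_zero_eq_zero_of_nonneg (hSmeas K) fun ω =>
        Finset.sum_nonneg fun i _ => hnonneg i ω)
  set l := (x - y) / x
  have hl : l ∈ Icc (0 : ℝ) 1 :=
    ⟨div_nonneg (by linarith [hy.2]) hx.le, (div_le_one hx).2 (by linarith [hy.1])⟩
  have hkey := iicPowScaling_map_sum_range hmeas hindep hident hnonneg hK0 hscaleK n l hl x
    ⟨hx.le, le_rfl⟩
  rw [div_mul_cancel₀ _ hx.ne', Measure.map_apply (hSmeas n) measurableSet_Iic,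
    Measure.map_apply (hSmeas n) measurableSet_Iic] at hkey
  calc (P {ω | ∑ i ∈ Finset.range n, X i ω ≤ x - y}).toReal
      ≤ l ^ (n / K) * (P {ω | ∑ i ∈ Finset.range n, X i ω ≤ x}).toReal := by
        have := ENNReal.toReal_mono (by finiteness) hkey
        rwa [ENNReal.toReal_mul, ENNReal.toReal_pow, ENNReal.toReal_ofReal hl.1] at this
    _ ≤ l ^ ((n : ℝ) / (K : ℝ) - 1) * (P {ω | ∑ i ∈ Finset.range n, X i ω ≤ x}).toReal := by
        gcongr
        exact pow_div_le_rpow_div_sub_one hl hK0 hn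

theorem stmt14
    {Ω : Type*} [MeasurableSpace Ω] (P : Measure Ω) [IsProbabilityMeasure P]
    (X : ℕ → Ω → ℝ)
    (hmeas : ∀ i, Measurable (X i))
    (hindep : iIndepFun X P)
    (hident : ∀ i, IdentDistrib (X i) (X 0) P P)
    (hnonneg : ∀ i ω, 0 ≤ X i ω)
    (x : ℝ) (hx : 0 < x)
    (K : ℕ) (hK : 1 ≤ K)
    (fK : ℝ → ℝ) (hmeasfK : Measurable fK)
    (hdens : Measure.map (fun ω => ∑ i ∈ Finset.range K, X i ω) P =
      (volume : Measure ℝ).withDensity (fun t => ENNReal.ofReal (fK t)))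
    (hmono : MonotoneOn fK (Icc 0 x)) :
    ∀ n : ℕ, K ≤ n → ∀ y ∈ Icc (0 : ℝ) x,
      (P {ω | ∑ i ∈ Finset.range n, X i ω ≤ x - y}).toReal ≤
        ((x - y) / x) ^ ((n : ℝ) / (K : ℝ) - 1)
          * (P {ω | ∑ i ∈ Finset.range n, X i ω ≤ x}).toReal :=
  stmt14_general P X hmeas hindep hident hnonneg x hx K hK fK hdens hmono
end

section
/- Let (X_n) be i.i.d. discrete nonnegative random variables with p := P[X_1 = 0] ∈ (0,1) and x_min := inf{a > 0 : P[X_1 = a] > 0} > 0. Fix x > 0 and define Λ(λ) = log E[e^{λX_1}] for λ ≤ 0. Then for any C > 1 and all n large enough: log p ≤ (1/n) log P[S_n ≤ x] ≤ log p + C (x/x_min) (log n)/n. -/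
/-!
Let `k = ⌊x / xmin⌋`. Almost surely every `X i` is `0` or at least `xmin`, so on `{S_n ≤ x}` at most
`k` of `X_0, …, X_{n-1}` are nonzero, i.e. at least `n - k` of them vanish. A union bound over the
`n.choose k ≤ n ^ k` choices of these indices gives `P[S_n ≤ x] ≤ n ^ k p ^ (n - k)`, while
`{X_0 = ⋯ = X_{n-1} = 0} ⊆ {S_n ≤ x}` gives `p ^ n ≤ P[S_n ≤ x]`. Taking logarithms, the upper bound
is `log p + k (log n - log p) / n`, and `-k log p ≤ (C - 1) k log n` once `n` is large.
-/

open MeasureTheory ProbabilityTheory Filter Set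
open scoped ENNReal Topology

open Finset in
theorem Finset.card_sub_floor_le_card_filter_eq_zero {ι : Type*} (s : Finset ι) {y : ι → ℝ}
    {m x : ℝ} (hm : 0 < m) (hy : ∀ i ∈ s, y i = 0 ∨ m ≤ y i) (hsum : ∑ i ∈ s, y i ≤ x) :
    #s - ⌊x / m⌋₊ ≤ #{i ∈ s | y i = 0} := by
  have hmass : (#{i ∈ s | y i ≠ 0} : ℝ) * m ≤ x :=
    calc (#{i ∈ s | y i ≠ 0} : ℝ) * m = ∑ _i ∈ s with y _i ≠ 0, m := by
          rw [sum_const, nsmul_eq_mul]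
      _ ≤ ∑ i ∈ s with y i ≠ 0, y i :=
          sum_le_sum fun i hi => (hy i (mem_filter.1 hi).1).resolve_left (mem_filter.1 hi).2
      _ = ∑ i ∈ s, y i := sum_filter_ne_zero s
      _ ≤ x := hsum
  have hnonzero : #{i ∈ s | y i ≠ 0} ≤ ⌊x / m⌋₊ := Nat.le_floor ((le_div_iff₀ hm).2 hmass)
  have hsplit := card_filter_add_card_filter_not (s := s) (fun i => y i = 0)
  simp only [← ne_eq] at hsplit
  omega

section IndependentCopies

variable {Ω β : Type*} [MeasurableSpace Ω] [MeasurableSpace β] {P : Measure Ω}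

theorem ProbabilityTheory.iIndepFun.measure_biInter_preimage_eq_pow_s19 {ι : Type*}
    {X : ι → Ω → β} {i₀ : ι} (hindep : iIndepFun X P)
    (hident : ∀ i, IdentDistrib (X i) (X i₀) P P) {s : Set β}
    (hs : MeasurableSet s) (T : Finset ι) :
    P (⋂ i ∈ T, X i ⁻¹' s) = P (X i₀ ⁻¹' s) ^ T.card := by
  rw [hindep.meas_biInter fun i _ => ⟨s, hs, rfl⟩,
    Finset.prod_congr rfl fun i _ => (hident i).measure_mem_eq hs, Finset.prod_const]

variable {X : ℕ → Ω → β} (hindep : iIndepFun X P) (hident : ∀ i, IdentDistrib (X i) (X 0) P P)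
include hindep hident

open Finset in
theorem ProbabilityTheory.iIndepFun.measure_le_card_filter_mem_le {s : Set β}
    [DecidablePred (· ∈ s)] (hs : MeasurableSet s) (n m : ℕ) :
    P {ω | m ≤ #{i ∈ range n | X i ω ∈ s}} ≤ n.choose m * P (X 0 ⁻¹' s) ^ m := by
  have hcover : {ω | m ≤ #{i ∈ range n | X i ω ∈ s}} ⊆
      ⋃ T ∈ powersetCard m (range n), ⋂ i ∈ T, X i ⁻¹' s := by
    intro ω hω
    obtain ⟨T, hT, hTcard⟩ := exists_subset_card_eq hω
    refine Set.mem_biUnion (mem_powersetCard.2 ⟨hT.trans (filter_subset _ _), hTcard⟩) ?_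
    exact Set.mem_iInter₂.2 fun i hi => (mem_filter.1 (hT hi)).2
  calc P {ω | m ≤ #{i ∈ range n | X i ω ∈ s}}
      ≤ ∑ T ∈ powersetCard m (range n), P (⋂ i ∈ T, X i ⁻¹' s) :=
        (measure_mono hcover).trans (measure_biUnion_finset_le _ _)
    _ = ∑ _T ∈ powersetCard m (range n), P (X 0 ⁻¹' s) ^ m :=
        sum_congr rfl fun T hT => by
          rw [hindep.measure_biInter_preimage_eq_pow_s19 hident hs, (mem_powersetCard.1 hT).2]
    _ = n.choose m * P (X 0 ⁻¹' s) ^ m := by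
        rw [sum_const, card_powersetCard, card_range, nsmul_eq_mul]

end IndependentCopies

section PartialSums

variable {Ω : Type*} [MeasurableSpace Ω] {P : Measure Ω} {X : ℕ → Ω → ℝ}
  (hindep : iIndepFun X P) (hident : ∀ i, IdentDistrib (X i) (X 0) P P)
include hindep hident

theorem ProbabilityTheory.iIndepFun.pow_le_measure_sum_le {x : ℝ} (hx : 0 ≤ x) (n : ℕ) :
    P (X 0 ⁻¹' {0}) ^ n ≤ P {ω | ∑ i ∈ Finset.range n, X i ω ≤ x} := by
  have hall_zero : (⋂ i ∈ Finset.range n, X i ⁻¹' {0}) ⊆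
      {ω | ∑ i ∈ Finset.range n, X i ω ≤ x} := fun ω hω => by
    simp [Finset.sum_eq_zero fun i hi => Set.mem_iInter₂.1 hω i hi, hx]
  calc P (X 0 ⁻¹' {0}) ^ n = P (⋂ i ∈ Finset.range n, X i ⁻¹' {0}) := by
        rw [hindep.measure_biInter_preimage_eq_pow_s19 hident (measurableSet_singleton 0),
          Finset.card_range]
    _ ≤ P {ω | ∑ i ∈ Finset.range n, X i ω ≤ x} := measure_mono hall_zero

theorem ProbabilityTheory.iIndepFun.measure_sum_le_le_choose_mul_pow {m : ℝ} (hm : 0 < m)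
    (hsupp : ∀ᵐ ω ∂P, X 0 ω = 0 ∨ m ≤ X 0 ω) (x : ℝ) (n : ℕ) :
    P {ω | ∑ i ∈ Finset.range n, X i ω ≤ x} ≤
      n.choose (n - ⌊x / m⌋₊) * P (X 0 ⁻¹' {0}) ^ (n - ⌊x / m⌋₊) := by
  have hsupp_all : ∀ᵐ ω ∂P, ∀ i, X i ω = 0 ∨ m ≤ X i ω :=
    ae_all_iff.2 fun i => (hident i).symm.ae_mem_snd
      ((measurableSet_singleton 0).union measurableSet_Ici) hsupp
  refine le_trans (measure_mono_ae ?_)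
    (hindep.measure_le_card_filter_mem_le hident (measurableSet_singleton 0) n _)
  filter_upwards [hsupp_all] with ω hω hsum
  have h := (Finset.range n).card_sub_floor_le_card_filter_eq_zero hm (fun i _ => hω i) hsum
  rw [Finset.card_range] at h
  exact h

end PartialSums

theorem Real.log_le_one_div_mul_log_of_pow_le {p a : ℝ} (hp : 0 < p) {n : ℕ} (hn : 0 < n)
    (hlow : p ^ n ≤ a) : Real.log p ≤ (1 / (n : ℝ)) * Real.log a := by
  have hnR : (0 : ℝ) < n := Nat.cast_pos.2 hn
  have h := Real.log_le_log (pow_pos hp n) hlow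
  rw [Real.log_pow] at h
  rw [one_div_mul_eq_div, le_div_iff₀ hnR]
  linarith

theorem Real.one_div_mul_log_le_of_le_pow_mul_pow {p a c C : ℝ} (hp : 0 < p) {n k : ℕ}
    (hn : 0 < n) (hkn : k ≤ n) (hkc : (k : ℝ) ≤ c) (hC : 1 ≤ C)
    (hlogn : -Real.log p ≤ (C - 1) * Real.log n)
    (ha : 0 < a) (hup : a ≤ (n : ℝ) ^ k * p ^ (n - k)) :
    (1 / (n : ℝ)) * Real.log a ≤ Real.log p + C * c * Real.log n / n := by
  have hnR : (0 : ℝ) < n := Nat.cast_pos.2 hn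
  have hlogn_nonneg : 0 ≤ Real.log n := Real.log_nonneg (by exact_mod_cast hn)
  have hloga : Real.log a ≤ k * Real.log n + (n - k) * Real.log p := by
    have h := Real.log_le_log ha hup
    rwa [Real.log_mul (by positivity) (by positivity), Real.log_pow, Real.log_pow,
      Nat.cast_sub hkn] at h
  have hk_logp : k * -Real.log p ≤ (C - 1) * c * Real.log n :=
    calc k * -Real.log p ≤ k * ((C - 1) * Real.log n) := by gcongr
      _ ≤ c * ((C - 1) * Real.log n) := by gcongr
      _ = (C - 1) * c * Real.log n := by ring
  have hc_log : k * Real.log n ≤ c * Real.log n := by gcongr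
  rw [one_div_mul_eq_div, div_le_iff₀ hnR, add_mul, div_mul_cancel₀ _ hnR.ne']
  linarith

theorem stmt19_general
    {Ω : Type*} [MeasurableSpace Ω] (P : Measure Ω) [IsProbabilityMeasure P]
    (X : ℕ → Ω → ℝ)
    (hindep : iIndepFun X P)
    (hident : ∀ i, IdentDistrib (X i) (X 0) P P)
    (p : ℝ) (hp : p = (P {ω | X 0 ω = 0}).toReal)
    (hp0 : 0 < p)
    (xmin : ℝ)
    (hxmpos : 0 < xmin)
    (hsupp : ∀ᵐ ω ∂P, X 0 ω = 0 ∨ xmin ≤ X 0 ω)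
    (x : ℝ) (hx : 0 < x) :
    ∀ C : ℝ, 1 < C → ∀ᶠ n : ℕ in atTop,
      Real.log p ≤
          (1 / (n : ℝ)) *
            Real.log (P {ω | ∑ i ∈ Finset.range n, X i ω ≤ x}).toReal ∧
      (1 / (n : ℝ)) *
          Real.log (P {ω | ∑ i ∈ Finset.range n, X i ω ≤ x}).toReal ≤
        Real.log p + C * (x / xmin) * Real.log (n : ℝ) / (n : ℝ) := by
  intro C hC
  set k := ⌊x / xmin⌋₊
  have hp_preimage : p = (P (X 0 ⁻¹' {0})).toReal := hp
  have hlower : ∀ n : ℕ, p ^ n ≤ (P {ω | ∑ i ∈ Finset.range n, X i ω ≤ x}).toReal := fun n => by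
    rw [hp_preimage, ← ENNReal.toReal_pow]
    exact ENNReal.toReal_mono (measure_ne_top _ _) (hindep.pow_le_measure_sum_le hident hx.le n)
  have hupper : ∀ n : ℕ, k ≤ n →
      (P {ω | ∑ i ∈ Finset.range n, X i ω ≤ x}).toReal ≤ (n : ℝ) ^ k * p ^ (n - k) := by
    intro n hkn
    have h := ENNReal.toReal_mono (by finiteness)
      (hindep.measure_sum_le_le_choose_mul_pow hident hxmpos hsupp x n)
    rw [ENNReal.toReal_mul, ENNReal.toReal_pow, ENNReal.toReal_natCast, ← hp_preimage,
      Nat.choose_symm hkn] at h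
    exact h.trans (by gcongr; exact_mod_cast Nat.choose_le_pow n k)
  have hlogn : ∀ᶠ n : ℕ in atTop, -Real.log p ≤ (C - 1) * Real.log n :=
    ((Real.tendsto_log_atTop.comp tendsto_natCast_atTop_atTop).const_mul_atTop
      (sub_pos.2 hC)).eventually_ge_atTop _
  filter_upwards [hlogn, eventually_ge_atTop (k + 1)] with n hlogn hn
  exact ⟨Real.log_le_one_div_mul_log_of_pow_le hp0 (by omega) (hlower n),
    Real.one_div_mul_log_le_of_le_pow_mul_pow hp0 (by omega) (by omega)
      (Nat.floor_le (div_pos hx hxmpos).le) hC.le hlogn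
      ((pow_pos hp0 n).trans_le (hlower n)) (hupper n (by omega))⟩

theorem stmt19
    {Ω : Type*} [MeasurableSpace Ω] (P : Measure Ω) [IsProbabilityMeasure P]
    (X : ℕ → Ω → ℝ)
    (hmeas : ∀ i, Measurable (X i))
    (hindep : iIndepFun X P)
    (hident : ∀ i, IdentDistrib (X i) (X 0) P P)
    (hnonneg : ∀ i ω, 0 ≤ X i ω)
    (hdiscrete : ∃ s : Set ℝ, s.Countable ∧ P (X 0 ⁻¹' s) = 1)
    (p : ℝ) (hp : p = (P {ω | X 0 ω = 0}).toReal)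
    (hp0 : 0 < p) (hp1 : p < 1)
    (xmin : ℝ)
    (hxm : xmin = sInf {b : ℝ | 0 < b ∧ P (X 0 ⁻¹' {b}) ≠ 0})
    (hxmpos : 0 < xmin)
    (hsupp : ∀ᵐ ω ∂P, X 0 ω = 0 ∨ xmin ≤ X 0 ω)
    (x : ℝ) (hx : 0 < x) :
    ∀ C : ℝ, 1 < C → ∀ᶠ n : ℕ in atTop,
      Real.log p ≤
          (1 / (n : ℝ)) *
            Real.log (P {ω | ∑ i ∈ Finset.range n, X i ω ≤ x}).toReal ∧
      (1 / (n : ℝ)) *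
          Real.log (P {ω | ∑ i ∈ Finset.range n, X i ω ≤ x}).toReal ≤
        Real.log p + C * (x / xmin) * Real.log (n : ℝ) / (n : ℝ) :=
  stmt19_general P X hindep hident p hp hp0 xmin hxmpos hsupp x hx
end
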